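/- arXiv:2511.06040 — 6 statements merged into one kernel-verified Lean document; each statement's English description precedes it below -/
import Mathlib

section
/- Fix real parameters λ, μ, ρ ∈ (0,1]. Then there exists a constant D ≥ 1, depending only on λ, μ, ρ, such that for every integer ℓ ≥ 1, D⁻¹·A₊^ℓ ≤ Σ_{ω : ω(0) = ω(ℓ−1) = •} λ^{2·e•(ω)} μ^{2·e∘(ω)} ρ^{2·diff(ω)} ≤ D·A₊^ℓ, where the sum ranges over decoration strings of length ℓ whose first and last symbols both equal •. (This is the reduced form of Lemma 2.10, equation (eq-goal-lem-2.5): the two-sided growth estimate for the weighted count of decorated paths whose two leaf edges are •-decorated.) -/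
/-!
Statement 1 (reduced form of Lemma 2.10, equation (eq-goal-lem-2.5)).

A decoration string of length `ℓ` is `ω : Fin ℓ → Bool`, where `true` stands for `•`
and `false` for `∘`.
-/

/-- number of `•` (i.e. `true`) symbols in the decoration string `ω`. -/
def eBullet {ℓ : ℕ} (ω : Fin ℓ → Bool) : ℕ :=
  (Finset.univ.filter fun i => ω i = true).card

/-- number of adjacent disagreements `#{0 ≤ i ≤ ℓ−2 : ω(i) ≠ ω(i+1)}`. -/
def diffCount {ℓ : ℕ} (ω : Fin ℓ → Bool) : ℕ :=
  (Finset.univ.filter fun i : Fin (ℓ - 1) =>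
    ω ⟨i.1, by have := i.2; omega⟩ ≠ ω ⟨i.1 + 1, by have := i.2; omega⟩).card

/-- the weight `Ξ(ω)² = λ^{2 e•(ω)} μ^{2 e∘(ω)} ρ^{2 diff(ω)}` of the string `ω`,
with `e∘(ω) = ℓ - e•(ω)`. -/
noncomputable def xiSq (lam mu rho : ℝ) {ℓ : ℕ} (ω : Fin ℓ → Bool) : ℝ :=
  lam ^ (2 * eBullet ω) * mu ^ (2 * (ℓ - eBullet ω)) * rho ^ (2 * diffCount ω)

/-- the top transfer-matrix eigenvalue
`A₊ = (λ² + μ² + √((λ²−μ²)² + 4ρ⁴λ²μ²))/2`. -/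
noncomputable def Aplus (lam mu rho : ℝ) : ℝ :=
  (lam ^ 2 + mu ^ 2 + Real.sqrt ((lam ^ 2 - mu ^ 2) ^ 2 + 4 * rho ^ 4 * lam ^ 2 * mu ^ 2)) / 2

-- snoc lemmas
lemma eBullet_snoc {n : ℕ} (ω : Fin n → Bool) (b : Bool) :
    eBullet (Fin.snoc ω b : Fin (n+1) → Bool) = eBullet ω + (if b then 1 else 0) := by
  unfold eBullet
  rw [Finset.card_filter, Finset.card_filter, Fin.sum_univ_castSucc]
  simp [Fin.snoc_castSucc, Fin.snoc_last]

lemma eBullet_le {n : ℕ} (ω : Fin n → Bool) : eBullet ω ≤ n := by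
  unfold eBullet
  exact (Finset.card_filter_le _ _).trans (by simp)

lemma diffCount_snoc {n : ℕ} (ω : Fin (n+1) → Bool) (b : Bool) :
    diffCount (Fin.snoc ω b : Fin (n+2) → Bool)
      = diffCount ω + (if ω (Fin.last n) ≠ b then 1 else 0) := by
  unfold diffCount
  rw [Finset.card_filter, Finset.card_filter]
  show (∑ i : Fin (n+1), _) = (∑ i : Fin n, _) + _
  rw [Fin.sum_univ_castSucc]
  congr 1
  · apply Finset.sum_congr rfl
    intro i _
    congr 2
    · show (Fin.snoc ω b : Fin (n+2) → Bool) ⟨i.1, _⟩ = ω ⟨i.1, _⟩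
      have : (⟨i.1, by omega⟩ : Fin (n+2)) = Fin.castSucc ⟨i.1, by omega⟩ := rfl
      rw [this, Fin.snoc_castSucc]
    · show (Fin.snoc ω b : Fin (n+2) → Bool) ⟨i.1+1, _⟩ = ω ⟨i.1+1, _⟩
      have : (⟨i.1+1, by omega⟩ : Fin (n+2)) = Fin.castSucc ⟨i.1+1, by omega⟩ := rfl
      rw [this, Fin.snoc_castSucc]
  · have h1 : (Fin.snoc ω b : Fin (n+2) → Bool) ⟨(Fin.last n).1, by simp only [Fin.val_last]; omega⟩ = ω (Fin.last n) := by
      have : (⟨(Fin.last n).1, by simp only [Fin.val_last]; omega⟩ : Fin (n+2)) = Fin.castSucc (Fin.last n) := rfl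
      rw [this, Fin.snoc_castSucc]
    have h2 : (Fin.snoc ω b : Fin (n+2) → Bool) ⟨(Fin.last n).1 + 1, by simp⟩ = b := by
      have : (⟨(Fin.last n).1 + 1, by simp⟩ : Fin (n+2)) = Fin.last (n+1) := rfl
      rw [this, Fin.snoc_last]
    simp only [h1, h2]

lemma xiSq_snoc (lam mu rho : ℝ) {n : ℕ} (ω : Fin (n+1) → Bool) (b : Bool) :
    xiSq lam mu rho (Fin.snoc ω b : Fin (n+2) → Bool)
      = xiSq lam mu rho ω *
        ((if b then lam^2 else mu^2) * (if ω (Fin.last n) = b then 1 else rho^2)) := by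
  have he : eBullet ω ≤ n + 1 := eBullet_le ω
  unfold xiSq
  rw [eBullet_snoc, diffCount_snoc]
  rcases b <;> rcases hl : ω (Fin.last n) <;>
    simp only [hl, if_true, if_false, Nat.add_zero, ne_eq, not_true_eq_false,
      not_false_eq_true, Bool.true_eq_false, Bool.false_eq_true, ite_true, ite_false]
  · -- b = false, last = false : no rho factor, extra mu
    rw [show (n+2) - eBullet ω = ((n+1) - eBullet ω) + 1 from by omega,
      Nat.mul_add, pow_add]
    ring
  · -- b = false, last = true : rho factor, extra mu
    rw [show (n+2) - eBullet ω = ((n+1) - eBullet ω) + 1 from by omega,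
      Nat.mul_add, Nat.mul_add, pow_add, pow_add]
    ring
  · -- b = true, last = false : rho factor, extra lam
    rw [show (n+2) - (eBullet ω + 1) = (n+1) - eBullet ω from by omega,
      Nat.mul_add, Nat.mul_add, pow_add, pow_add]
    ring
  · -- b = true, last = true
    rw [show (n+2) - (eBullet ω + 1) = (n+1) - eBullet ω from by omega,
      Nat.mul_add, pow_add]
    ring

noncomputable def Ssum (lam mu rho : ℝ) (n : ℕ) (b : Bool) : ℝ :=
  ∑ ω : Fin (n+1) → Bool,
    if ω 0 = true ∧ ω (Fin.last n) = b then xiSq lam mu rho ω else 0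

lemma Ssum_zero_true (lam mu rho : ℝ) : Ssum lam mu rho 0 true = lam ^ 2 := by
  rw [Ssum, ← Equiv.sum_comp (Equiv.funUnique (Fin 1) Bool).symm]
  have h1 : eBullet (uniqueElim true : Fin 1 → Bool) = 1 := by decide
  have h2 : diffCount (uniqueElim true : Fin 1 → Bool) = 0 := by decide
  simp [Fintype.sum_bool, Equiv.funUnique, xiSq, h1, h2]

lemma Ssum_zero_false (lam mu rho : ℝ) : Ssum lam mu rho 0 false = 0 := by
  rw [Ssum, ← Equiv.sum_comp (Equiv.funUnique (Fin 1) Bool).symm]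
  simp [Fintype.sum_bool, Equiv.funUnique]

lemma snoc_zero' {n : ℕ} (ω : Fin (n+1) → Bool) (c : Bool) :
    (Fin.snoc ω c : Fin (n+2) → Bool) 0 = ω 0 := by
  have : (0 : Fin (n+2)) = Fin.castSucc (0 : Fin (n+1)) := rfl
  rw [this, Fin.snoc_castSucc]

lemma Ssum_succ (lam mu rho : ℝ) (n : ℕ) (b : Bool) :
    Ssum lam mu rho (n+1) b
      = (if b then lam^2 else mu^2) *
        (Ssum lam mu rho n b + rho^2 * Ssum lam mu rho n (!b)) := by
  have key : ∀ (c : Bool) (ω : Fin (n+1) → Bool),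
      (if (Fin.snoc ω c : Fin (n+2) → Bool) 0 = true ∧
          (Fin.snoc ω c : Fin (n+2) → Bool) (Fin.last (n+1)) = b
        then xiSq lam mu rho (Fin.snoc ω c : Fin (n+2) → Bool) else 0)
      = if c = b then
          (if b then lam^2 else mu^2) *
            ((if ω 0 = true ∧ ω (Fin.last n) = b then xiSq lam mu rho ω else 0)
              + rho^2 * (if ω 0 = true ∧ ω (Fin.last n) = !b then xiSq lam mu rho ω else 0))
        else 0 := by
    intro c ω
    rw [xiSq_snoc, snoc_zero', Fin.snoc_last]
    rcases c <;> rcases b <;> rcases h0 : ω 0 <;> rcases hl : ω (Fin.last n) <;>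
      simp [h0, hl] <;> ring
  rw [show Ssum lam mu rho (n+1) b
      = ∑ p : Bool × (Fin (n+1) → Bool),
          if (Fin.snoc p.2 p.1 : Fin (n+2) → Bool) 0 = true ∧
              (Fin.snoc p.2 p.1 : Fin (n+2) → Bool) (Fin.last (n+1)) = b
            then xiSq lam mu rho (Fin.snoc p.2 p.1 : Fin (n+2) → Bool) else 0 from
    (Equiv.sum_comp (Fin.snocEquiv (fun _ : Fin (n+2) => Bool)) _).symm]
  rw [Fintype.sum_prod_type]
  simp only [key]
  rw [Fintype.sum_bool]
  rcases b <;>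
    simp [Finset.sum_add_distrib, Finset.mul_sum, Ssum, ← Finset.sum_add_distrib, mul_add]


set_option maxHeartbeats 1000000 in
/-- Fix `λ, μ, ρ ∈ (0,1]`.  There is a constant `D ≥ 1`, depending only on `λ, μ, ρ`, such that
for every `ℓ ≥ 1` the total weight of all decoration strings of length `ℓ` whose first and last
symbols both equal `•` satisfies the two-sided bound `D⁻¹ A₊^ℓ ≤ · ≤ D A₊^ℓ`. -/
theorem stmt1 (lam mu rho : ℝ)
    (hlam : 0 < lam ∧ lam ≤ 1) (hmu : 0 < mu ∧ mu ≤ 1) (hrho : 0 < rho ∧ rho ≤ 1) :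
    ∃ D : ℝ, 1 ≤ D ∧ ∀ ℓ : ℕ, ∀ hℓ : 1 ≤ ℓ,
      D⁻¹ * Aplus lam mu rho ^ ℓ ≤
        (∑ ω ∈ Finset.univ.filter (fun ω : Fin ℓ → Bool =>
            ω ⟨0, by omega⟩ = true ∧ ω ⟨ℓ - 1, by omega⟩ = true), xiSq lam mu rho ω) ∧
      (∑ ω ∈ Finset.univ.filter (fun ω : Fin ℓ → Bool =>
            ω ⟨0, by omega⟩ = true ∧ ω ⟨ℓ - 1, by omega⟩ = true), xiSq lam mu rho ω) ≤
        D * Aplus lam mu rho ^ ℓ := by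
  obtain ⟨hl0, hl1⟩ := hlam
  obtain ⟨hm0, hm1⟩ := hmu
  obtain ⟨hr0, hr1⟩ := hrho
  set A := Aplus lam mu rho with hAdef
  set s := Real.sqrt ((lam ^ 2 - mu ^ 2) ^ 2 + 4 * rho ^ 4 * lam ^ 2 * mu ^ 2) with hs
  have hs0 : 0 ≤ s := Real.sqrt_nonneg _
  have hs2 : s ^ 2 = (lam ^ 2 - mu ^ 2) ^ 2 + 4 * rho ^ 4 * lam ^ 2 * mu ^ 2 :=
    Real.sq_sqrt (by positivity)
  have hA : A = (lam ^ 2 + mu ^ 2 + s) / 2 := rfl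
  have hA0 : 0 < A := by rw [hA]; nlinarith
  have hAl : lam ^ 2 ≤ A := by
    have hle : lam ^ 2 - mu ^ 2 ≤ s := by
      rcases le_or_gt (lam ^ 2 - mu ^ 2) 0 with h | h
      · linarith
      · rw [hs]
        refine (Real.le_sqrt' h).mpr ?_
        have : (0:ℝ) ≤ 4 * rho ^ 4 * lam ^ 2 * mu ^ 2 := by positivity
        linarith
    rw [hA]; linarith
  have hEig : A ^ 2 = (lam ^ 2 + mu ^ 2) * A - lam ^ 2 * mu ^ 2 * (1 - rho ^ 4) := by
    rw [hA]; nlinarith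
  have hInv : ∀ n : ℕ,
      mu ^ 2 * rho ^ 2 * Ssum lam mu rho n true + (A - lam ^ 2) * Ssum lam mu rho n false
        = A ^ n * (mu ^ 2 * rho ^ 2 * lam ^ 2) := by
    intro n
    induction n with
    | zero => rw [Ssum_zero_true, Ssum_zero_false]; ring
    | succ n ih =>
      rw [Ssum_succ, Ssum_succ]
      simp only [Bool.not_true, Bool.not_false, Bool.false_eq_true, if_true, if_false]
      rw [pow_succ]
      linear_combination A * ih - (Ssum lam mu rho n false) * hEig
  have hnn : ∀ n : ℕ, 0 ≤ Ssum lam mu rho n true ∧ 0 ≤ Ssum lam mu rho n false := by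
    intro n
    induction n with
    | zero =>
      rw [Ssum_zero_true, Ssum_zero_false]
      constructor
      · positivity
      · exact le_refl 0
    | succ n ih =>
      obtain ⟨h1, h2⟩ := ih
      rw [Ssum_succ, Ssum_succ]
      simp only [Bool.not_true, Bool.not_false, Bool.false_eq_true, if_true, if_false]
      constructor <;> positivity
  have hrr4 : rho ^ 4 ≤ 1 := pow_le_one₀ hr0.le hr1
  have hyx : ∀ n : ℕ,
      lam ^ 2 * rho ^ 2 * Ssum lam mu rho n false ≤ mu ^ 2 * Ssum lam mu rho n true := by
    intro n
    induction n with
    | zero =>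
      rw [Ssum_zero_true, Ssum_zero_false]
      have : (0:ℝ) ≤ mu ^ 2 * lam ^ 2 := by positivity
      linarith
    | succ n ih =>
      obtain ⟨h1, h2⟩ := hnn n
      rw [Ssum_succ, Ssum_succ]
      simp only [Bool.not_true, Bool.not_false, Bool.false_eq_true, if_true, if_false]
      have key : (0:ℝ) ≤ lam ^ 2 * mu ^ 2 * (1 - rho ^ 4) * Ssum lam mu rho n true := by
        have h4 : (0:ℝ) ≤ 1 - rho ^ 4 := by linarith
        positivity
      nlinarith [key]
  have hmr : (0:ℝ) < mu ^ 2 * rho ^ 2 := by positivity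
  have hupper : ∀ n : ℕ, Ssum lam mu rho n true ≤ lam ^ 2 * A ^ n := by
    intro n
    have h := hInv n
    have h2 := (hnn n).2
    have hy : (0:ℝ) ≤ (A - lam ^ 2) * Ssum lam mu rho n false :=
      mul_nonneg (sub_nonneg.mpr hAl) h2
    refine le_of_mul_le_mul_left ?_ hmr
    have : mu ^ 2 * rho ^ 2 * Ssum lam mu rho n true ≤ A ^ n * (mu ^ 2 * rho ^ 2 * lam ^ 2) := by
      linarith
    nlinarith [this]
  set c : ℝ := (lam ^ 4 * rho ^ 4) / (lam ^ 2 * rho ^ 4 + A - lam ^ 2) with hc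
  have hden : (0:ℝ) < lam ^ 2 * rho ^ 4 + A - lam ^ 2 := by
    have : (0:ℝ) < lam ^ 2 * rho ^ 4 := by positivity
    linarith
  have hc0 : 0 < c := by rw [hc]; positivity
  have hlower : ∀ n : ℕ, c * A ^ n ≤ Ssum lam mu rho n true := by
    intro n
    have h := hInv n
    have h2 := hyx n
    have h1 := (hnn n).1
    have h'' : (mu ^ 2 * rho ^ 2 * Ssum lam mu rho n true
          + (A - lam ^ 2) * Ssum lam mu rho n false) * (lam ^ 2 * rho ^ 2)
        = A ^ n * (mu ^ 2 * rho ^ 2 * lam ^ 2) * (lam ^ 2 * rho ^ 2) := by rw [h]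
    have t1 := mul_le_mul_of_nonneg_left h2 (sub_nonneg.mpr hAl)
    have key : mu ^ 2 * (A ^ n * (lam ^ 4 * rho ^ 4))
        ≤ mu ^ 2 * ((lam ^ 2 * rho ^ 4 + A - lam ^ 2) * Ssum lam mu rho n true) := by
      linarith [h'', t1]
    have k2 : lam ^ 4 * rho ^ 4 * A ^ n
        ≤ (lam ^ 2 * rho ^ 4 + A - lam ^ 2) * Ssum lam mu rho n true := by
      refine le_of_mul_le_mul_left ?_ (pow_pos hm0 2)
      linarith [key]
    rw [hc, div_mul_eq_mul_div, div_le_iff₀ hden]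
    linarith [k2]
  have hcd : (0:ℝ) < A / c := div_pos hA0 hc0
  have hld : (0:ℝ) ≤ lam ^ 2 / A := div_nonneg (sq_nonneg lam) hA0.le
  refine ⟨1 + lam ^ 2 / A + A / c, by linarith, ?_⟩
  intro ℓ hℓ
  obtain ⟨n, rfl⟩ : ∃ n, ℓ = n + 1 := ⟨ℓ - 1, by omega⟩
  have hsum : (∑ ω ∈ Finset.univ.filter (fun ω : Fin (n+1) → Bool =>
        ω ⟨0, by omega⟩ = true ∧ ω ⟨n + 1 - 1, by omega⟩ = true), xiSq lam mu rho ω)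
      = Ssum lam mu rho n true := by
    rw [Finset.sum_filter, Ssum]
    apply Finset.sum_congr rfl
    intro ω _
    have e0 : (⟨0, by omega⟩ : Fin (n+1)) = 0 := Fin.mk_zero
    have e1 : (⟨n + 1 - 1, by omega⟩ : Fin (n+1)) = Fin.last n := rfl
    rw [e0, e1]
  rw [hsum]
  have hD0 : (0:ℝ) < 1 + lam ^ 2 / A + A / c := by linarith
  have hAn : (0:ℝ) < A ^ n := pow_pos hA0 n
  have hAn1 : (0:ℝ) < A ^ (n+1) := pow_pos hA0 (n+1)
  constructor
  · have h1 : (1 + lam ^ 2 / A + A / c)⁻¹ ≤ (A / c)⁻¹ := by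
      apply inv_anti₀ hcd
      linarith
    have h2 : (A / c)⁻¹ * A ^ (n+1) = c * A ^ n := by
      rw [inv_div, pow_succ]
      field_simp
    calc (1 + lam ^ 2 / A + A / c)⁻¹ * A ^ (n+1)
        ≤ (A / c)⁻¹ * A ^ (n+1) := mul_le_mul_of_nonneg_right h1 hAn1.le
      _ = c * A ^ n := h2
      _ ≤ Ssum lam mu rho n true := hlower n
  · calc Ssum lam mu rho n true ≤ lam ^ 2 * A ^ n := hupper n
      _ = lam ^ 2 / A * A ^ (n+1) := by rw [pow_succ]; field_simp; ring
      _ ≤ (1 + lam ^ 2 / A + A / c) * A ^ (n+1) := by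
          apply mul_le_mul_of_nonneg_right _ hAn1.le
          linarith
end

section
/- Let γ > 0, ρ ∈ (0,1), and λ, μ ≥ 0 satisfy λ² ≤ γ and μ² ≤ γ. If λ²ρ²/(γ − λ² + λ²ρ²) + μ²ρ²/(γ − μ² + μ²ρ²) > 1, then A₊ > γ, where A₊ = (λ² + μ² + √((λ²−μ²)² + 4ρ⁴λ²μ²))/2. (This is the threshold claim proved inside Lemmas 2.2, 2.6, 2.10 and 2.14: the condition F(λ,μ,ρ,γ) > 1 together with λ², μ² ≤ γ forces the top transfer-matrix eigenvalue A₊ to exceed γ; note that under these hypotheses both denominators γ − λ² + λ²ρ² and γ − μ² + μ²ρ² are strictly positive.) -/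
lemma sub_add_mul_pos_of_le {γ a s : ℝ} (hγ : 0 < γ) (ha : a ≤ γ) (hs₀ : 0 < s) (hs₁ : s ≤ 1) :
    0 < γ - a + a * s := by
  nlinarith [mul_nonneg (sub_nonneg.2 ha) (sub_nonneg.2 hs₁), mul_pos hγ hs₀]

lemma one_lt_div_add_div_iff {γ a b s : ℝ} (ha : 0 < γ - a + a * s) (hb : 0 < γ - b + b * s) :
    1 < a * s / (γ - a + a * s) + b * s / (γ - b + b * s) ↔ (γ - a) * (γ - b) < a * b * s ^ 2 := by
  rw [div_add_div _ _ ha.ne' hb.ne', one_lt_div (mul_pos ha hb)]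
  constructor <;> intro h <;> linarith

lemma two_mul_lt_add_add_sqrt {γ a b t : ℝ} (h : (γ - a) * (γ - b) < a * b * t) :
    2 * γ < a + b + √((a - b) ^ 2 + 4 * t * a * b) := by
  rcases lt_or_ge (2 * γ - a - b) 0 with hneg | hnonneg
  · linarith [Real.sqrt_nonneg ((a - b) ^ 2 + 4 * t * a * b)]
  · have : 2 * γ - a - b < √((a - b) ^ 2 + 4 * t * a * b) := by
      rw [Real.lt_sqrt hnonneg]
      linear_combination 4 * h
    linarith

theorem stmt2_general (γ lam mu rho : ℝ) (hγ : 0 < γ) (hrho : 0 < rho ∧ rho < 1)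
    (hlam2 : lam ^ 2 ≤ γ) (hmu2 : mu ^ 2 ≤ γ)
    (hF : 1 < lam ^ 2 * rho ^ 2 / (γ - lam ^ 2 + lam ^ 2 * rho ^ 2)
          + mu ^ 2 * rho ^ 2 / (γ - mu ^ 2 + mu ^ 2 * rho ^ 2)) :
    γ < Aplus lam mu rho := by
  obtain ⟨hρ₀, hρ₁⟩ := hrho
  have hs₀ : 0 < rho ^ 2 := pow_pos hρ₀ 2
  have hs₁ : rho ^ 2 ≤ 1 := pow_le_one₀ hρ₀.le hρ₁.le
  rw [one_lt_div_add_div_iff (sub_add_mul_pos_of_le hγ hlam2 hs₀ hs₁)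
    (sub_add_mul_pos_of_le hγ hmu2 hs₀ hs₁), ← pow_mul] at hF
  have := two_mul_lt_add_add_sqrt hF
  unfold Aplus
  linarith

/-- threshold claim inside Lemmas 2.2, 2.6, 2.10, 2.14:
Let `γ > 0`, `ρ ∈ (0,1)`, and `λ, μ ≥ 0` with `λ² ≤ γ`, `μ² ≤ γ`.  If
`λ²ρ²/(γ − λ² + λ²ρ²) + μ²ρ²/(γ − μ² + μ²ρ²) > 1`, then `A₊ > γ`. -/
theorem stmt2 (γ lam mu rho : ℝ) (hγ : 0 < γ) (hrho : 0 < rho ∧ rho < 1)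
    (hlam : 0 ≤ lam) (hmu : 0 ≤ mu) (hlam2 : lam ^ 2 ≤ γ) (hmu2 : mu ^ 2 ≤ γ)
    (hF : 1 < lam ^ 2 * rho ^ 2 / (γ - lam ^ 2 + lam ^ 2 * rho ^ 2)
          + mu ^ 2 * rho ^ 2 / (γ - mu ^ 2 + mu ^ 2 * rho ^ 2)) :
    γ < Aplus lam mu rho :=
  stmt2_general γ lam mu rho hγ hrho hlam2 hmu2 hF
end

section
/- Let ((X_i, Y_i))_{i ∈ ι} be a correlated family with parameter ρ. Let ℓ ≥ 1 be an integer, let v : ℤ/ℓℤ → ι be injective, and let c : ℤ/ℓℤ → {•,∘}. For i ∈ ℤ/ℓℤ set T_i = X_{v(i)}·X_{v(i+1)} if c(i) = • and T_i = Y_{v(i)}·Y_{v(i+1)} if c(i) = ∘. Then the product ∏_{i ∈ ℤ/ℓℤ} T_i is integrable and E[∏_{i ∈ ℤ/ℓℤ} T_i] = ρ^D, where D = #{i ∈ ℤ/ℓℤ : c(i) ≠ c(i+1)}. (This is the moment identity for a decorated cycle underlying equation (eq-mean-Pb-f-S) in the proof of Lemma 3.1: each vertex incident to two edges of the same decoration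 contributes E[X²] = E[Y²] = 1, while each vertex incident to one •-edge and one ∘-edge contributes E[XY] = ρ.) -/
open MeasureTheory ProbabilityTheory

/-- A *correlated family with parameter `ρ`*: a family of `ℝ²`-valued random pairs
`(X i, Y i)`, `i : ι`, such that each `X i`, `Y i` is square-integrable with
`E[X i²] = E[Y i²] = 1` and `E[X i · Y i] = ρ`, and the pairs `(X i, Y i)` are mutually
independent as `ℝ × ℝ`-valued random variables. -/
structure CorrelatedFamily {Ω ι : Type*} [MeasurableSpace Ω] (P : Measure Ω)
    (X Y : ι → Ω → ℝ) (ρ : ℝ) : Prop where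
  memLp_X : ∀ i, MemLp (X i) 2 P
  memLp_Y : ∀ i, MemLp (Y i) 2 P
  secondMoment_X : ∀ i, ∫ ω, (X i ω) ^ 2 ∂P = 1
  secondMoment_Y : ∀ i, ∫ ω, (Y i ω) ^ 2 ∂P = 1
  correlation : ∀ i, ∫ ω, X i ω * Y i ω ∂P = ρ
  indep : iIndepFun (fun i ω => (X i ω, Y i ω)) P

private lemma iIndepFun_congr_ae {Ω ι : Type*} [MeasurableSpace Ω] {μ : Measure Ω}
    {β : ι → Type*} {m : ∀ i, MeasurableSpace (β i)} {f g : ∀ i, Ω → β i}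
    (h : iIndepFun f μ) (hfg : ∀ i, f i =ᵐ[μ] g i) : iIndepFun g μ := by
  rw [iIndepFun_iff_measure_inter_preimage_eq_mul] at h ⊢
  intro S sets hsets
  have h1 : ∀ i, μ (g i ⁻¹' sets i) = μ (f i ⁻¹' sets i) := fun i =>
    measure_congr ((hfg i).preimage _).symm
  have h2 : μ (⋂ i ∈ S, g i ⁻¹' sets i) = μ (⋂ i ∈ S, f i ⁻¹' sets i) :=
    measure_congr (Set.Finite.eventuallyEq_iInter S.finite_toSet
      fun i _ => ((hfg i).preimage _).symm)
  rw [h2, h S hsets]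
  exact Finset.prod_congr rfl fun i _ => (h1 i).symm

private lemma iIndepFun_reindex {Ω ι κ β : Type*} [MeasurableSpace Ω] {μ : Measure Ω}
    [mβ : MeasurableSpace β] {f : ι → Ω → β}
    (h : iIndepFun f μ) {g : κ → ι} (hg : Function.Injective g) :
    iIndepFun (fun j => f (g j)) μ := by
  classical
  rw [iIndepFun_iff_measure_inter_preimage_eq_mul] at h ⊢
  intro S sets hsets
  have key := h (S.image g) (sets := Function.extend g sets fun _ => Set.univ) ?_
  · rw [Finset.set_biInter_finset_image, Finset.prod_image (fun a _ b _ hab => hg hab)] at key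
    simpa only [hg.extend_apply] using key
  · intro i hi
    obtain ⟨j, hj, rfl⟩ := Finset.mem_image.1 hi
    rw [hg.extend_apply]
    exact hsets j hj

private lemma integrable_integral_finset_prod {Ω κ : Type*} [MeasurableSpace Ω] {μ : Measure Ω}
    [IsProbabilityMeasure μ] {W : κ → Ω → ℝ} (hmeas : ∀ j, Measurable (W j))
    (hindep : iIndepFun W μ)
    (hint : ∀ j, Integrable (W j) μ) (s : Finset κ) :
    Integrable (fun ω => ∏ j ∈ s, W j ω) μ ∧
      ∫ ω, ∏ j ∈ s, W j ω ∂μ = ∏ j ∈ s, ∫ ω, W j ω ∂μ := by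
  classical
  induction s using Finset.induction_on with
  | empty => refine ⟨?_, by simp⟩; simpa using (integrable_const (1:ℝ))
  | @insert i s hi ih =>
    have hIndep : IndepFun (fun ω => ∏ j ∈ s, W j ω) (W i) μ := by
      have := hindep.indepFun_finsetProd_of_notMem hmeas hi
      have he : (∏ j ∈ s, W j) = fun ω => ∏ j ∈ s, W j ω := by
        funext ω; simp [Finset.prod_apply]
      rwa [he] at this
    have hmul := hIndep.integrable_mul ih.1 (hint i)
    have hintegral := hIndep.integral_mul_eq_mul_integral ih.1.1 (hint i).1
    have he : (fun ω => ∏ j ∈ insert i s, W j ω)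
        = (fun ω => ∏ j ∈ s, W j ω) * W i := by
      funext ω; simp [Finset.prod_insert hi, Pi.mul_apply, mul_comm]
    constructor
    · rw [he]; exact hmul
    · calc ∫ ω, ∏ j ∈ insert i s, W j ω ∂μ
          = ∫ ω, ((fun ω => ∏ j ∈ s, W j ω) * W i) ω ∂μ := by rw [← he]
        _ = (∫ ω, ∏ j ∈ s, W j ω ∂μ) * ∫ ω, W i ω ∂μ := hintegral
        _ = ∏ j ∈ insert i s, ∫ ω, W j ω ∂μ := by
            rw [ih.2, Finset.prod_insert hi]; ring

private lemma integrable_mul_of_memLp_two {Ω : Type*} [MeasurableSpace Ω] {μ : Measure Ω}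
    {f g : Ω → ℝ} (hf : MemLp f 2 μ) (hg : MemLp g 2 μ) :
    Integrable (fun ω => f ω * g ω) μ := by
  have h1 := hf.integrable_sq
  have h2 := hg.integrable_sq
  refine ((h1.add h2).const_mul (1/2)).mono' (hf.1.mul hg.1) ?_
  filter_upwards with ω
  simp only [Real.norm_eq_abs, Pi.add_apply]
  rw [abs_mul]
  nlinarith [sq_nonneg (|f ω| - |g ω|), abs_nonneg (f ω), abs_nonneg (g ω), sq_abs (f ω),
    sq_abs (g ω)]

/-- moment identity for a decorated cycle, underlying (eq-mean-Pb-f-S) in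
Lemma 3.1.  Let `((X i, Y i))_{i ∈ ι}` be a correlated family with parameter `ρ`, let
`ℓ ≥ 1`, let `v : ℤ/ℓℤ → ι` be injective and `c : ℤ/ℓℤ → {•,∘}` (where `true = •`).
With `T i = X_{v i}·X_{v(i+1)}` if `c i = •` and `T i = Y_{v i}·Y_{v(i+1)}` if `c i = ∘`,
the product `∏ i, T i` is integrable and its expectation equals `ρ^D`, where
`D = #{i : c i ≠ c (i+1)}`. -/
theorem stmt5 {Ω ι : Type*} [MeasurableSpace Ω] (P : Measure Ω) [IsProbabilityMeasure P]
    (X Y : ι → Ω → ℝ) (ρ : ℝ) (hfam : CorrelatedFamily P X Y ρ)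
    (ℓ : ℕ) [NeZero ℓ] (v : ZMod ℓ → ι) (hv : Function.Injective v) (c : ZMod ℓ → Bool)
    (T : ZMod ℓ → Ω → ℝ)
    (hT : ∀ i ω, T i ω =
      if c i then X (v i) ω * X (v (i + 1)) ω else Y (v i) ω * Y (v (i + 1)) ω) :
    Integrable (fun ω => ∏ i : ZMod ℓ, T i ω) P ∧
    ∫ ω, (∏ i : ZMod ℓ, T i ω) ∂P
      = ρ ^ (Finset.univ.filter fun i : ZMod ℓ => c i ≠ c (i + 1)).card := by
  classical
  obtain ⟨hX2, hY2, hEX, hEY, hXYc, hind⟩ := hfam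
  -- measurable modifications
  set X' : ι → Ω → ℝ := fun i => (hX2 i).1.mk (X i) with hX'def
  set Y' : ι → Ω → ℝ := fun i => (hY2 i).1.mk (Y i) with hY'def
  have hX'm : ∀ i, Measurable (X' i) := fun i => (hX2 i).1.stronglyMeasurable_mk.measurable
  have hY'm : ∀ i, Measurable (Y' i) := fun i => (hY2 i).1.stronglyMeasurable_mk.measurable
  have hXe : ∀ i, X i =ᵐ[P] X' i := fun i => (hX2 i).1.ae_eq_mk
  have hYe : ∀ i, Y i =ᵐ[P] Y' i := fun i => (hY2 i).1.ae_eq_mk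
  have hX'2 : ∀ i, MemLp (X' i) 2 P := fun i => (hX2 i).ae_eq (hXe i)
  have hY'2 : ∀ i, MemLp (Y' i) 2 P := fun i => (hY2 i).ae_eq (hYe i)
  have hind' : iIndepFun (fun i ω => (X' i ω, Y' i ω)) P := by
    refine iIndepFun_congr_ae hind fun i => ?_
    filter_upwards [hXe i, hYe i] with ω h1 h2
    simp [h1, h2]
  -- vertex factors
  set Z : Bool → ι → Ω → ℝ := fun b => if b then X' else Y' with hZdef
  have hZm : ∀ b i, Measurable (Z b i) := by
    intro b i; cases b
    · simpa [hZdef] using hY'm i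
    · simpa [hZdef] using hX'm i
  have hZ2 : ∀ b i, MemLp (Z b i) 2 P := by
    intro b i; cases b
    · simpa [hZdef] using hY'2 i
    · simpa [hZdef] using hX'2 i
  set W : ZMod ℓ → Ω → ℝ := fun j ω => Z (c j) (v j) ω * Z (c (j - 1)) (v j) ω with hWdef
  have hWm : ∀ j, Measurable (W j) := fun j => (hZm _ _).mul (hZm _ _)
  have hWint : ∀ j, Integrable (W j) P := fun j =>
    integrable_mul_of_memLp_two (hZ2 _ _) (hZ2 _ _)
  -- independence of the W's
  have hWind : iIndepFun W P := by
    have h1 := iIndepFun_reindex hind' hv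
    have h2 := h1.comp (fun j (p : ℝ × ℝ) =>
        (if c j then p.1 else p.2) * (if c (j - 1) then p.1 else p.2))
        (fun j => by rcases hc1 : c j <;> rcases hc2 : c (j - 1) <;> simp only [hc1, hc2, if_true, if_false, Bool.false_eq_true] <;> fun_prop)
    have he : W = fun j => (fun p : ℝ × ℝ =>
        (if c j then p.1 else p.2) * (if c (j - 1) then p.1 else p.2))
          ∘ (fun ω => (X' (v j) ω, Y' (v j) ω)) := by
      funext j ω
      simp only [hWdef, hZdef, Function.comp_apply]
      cases c j <;> cases c (j - 1) <;> simp
    rw [he]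
    exact h2
  -- integrals of the W's
  have hXX : ∀ i, ∫ ω, X' i ω * X' i ω ∂P = 1 := by
    intro i
    have h : (fun ω => X' i ω * X' i ω) =ᵐ[P] fun ω => (X i ω) ^ 2 := by
      filter_upwards [hXe i] with ω h; rw [← h]; ring
    rw [integral_congr_ae h, hEX i]
  have hYY : ∀ i, ∫ ω, Y' i ω * Y' i ω ∂P = 1 := by
    intro i
    have h : (fun ω => Y' i ω * Y' i ω) =ᵐ[P] fun ω => (Y i ω) ^ 2 := by
      filter_upwards [hYe i] with ω h; rw [← h]; ring
    rw [integral_congr_ae h, hEY i]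
  have hXY' : ∀ i, ∫ ω, X' i ω * Y' i ω ∂P = ρ := by
    intro i
    have h : (fun ω => X' i ω * Y' i ω) =ᵐ[P] fun ω => X i ω * Y i ω := by
      filter_upwards [hXe i, hYe i] with ω h1 h2; rw [← h1, ← h2]
    rw [integral_congr_ae h, hXYc i]
  have hYX' : ∀ i, ∫ ω, Y' i ω * X' i ω ∂P = ρ := by
    intro i
    have h : (fun ω => Y' i ω * X' i ω) =ᵐ[P] fun ω => X i ω * Y i ω := by
      filter_upwards [hXe i, hYe i] with ω h1 h2; rw [← h1, ← h2]; ring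
    rw [integral_congr_ae h, hXYc i]
  have hWmean : ∀ j, ∫ ω, W j ω ∂P = if c (j - 1) = c j then 1 else ρ := by
    intro j
    rcases hcj : c j <;> rcases hcj' : c (j - 1) <;>
      simp [hWdef, hZdef, hcj, hcj', hXX, hYY, hXY', hYX']
  -- the product of the T's agrees a.e. with the product of the W's
  have hTae : (fun ω => ∏ i : ZMod ℓ, T i ω) =ᵐ[P] (fun ω => ∏ j : ZMod ℓ, W j ω) := by
    have h' : ∀ᵐ ω ∂P, ∀ i : ZMod ℓ, X (v i) ω = X' (v i) ω ∧ Y (v i) ω = Y' (v i) ω := by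
      rw [MeasureTheory.ae_all_iff]
      intro i
      filter_upwards [hXe (v i), hYe (v i)] with ω h1 h2
      exact ⟨h1, h2⟩
    filter_upwards [h'] with ω hω
    have hT' : ∀ i : ZMod ℓ, T i ω = Z (c i) (v i) ω * Z (c i) (v (i + 1)) ω := by
      intro i
      rw [hT i ω]
      rcases hci : c i
      · simp [hZdef, hci, (hω i).2, (hω (i + 1)).2]
      · simp [hZdef, hci, (hω i).1, (hω (i + 1)).1]
    calc ∏ i : ZMod ℓ, T i ω
        = ∏ i : ZMod ℓ, (Z (c i) (v i) ω * Z (c i) (v (i + 1)) ω) :=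
          Finset.prod_congr rfl fun i _ => hT' i
      _ = (∏ i : ZMod ℓ, Z (c i) (v i) ω) * ∏ i : ZMod ℓ, Z (c i) (v (i + 1)) ω :=
          Finset.prod_mul_distrib
      _ = (∏ j : ZMod ℓ, Z (c j) (v j) ω) * ∏ j : ZMod ℓ, Z (c (j - 1)) (v j) ω := by
          congr 1
          have := Equiv.prod_comp (Equiv.addRight (1 : ZMod ℓ))
            (fun j => Z (c (j - 1)) (v j) ω)
          rw [← this]
          refine Finset.prod_congr rfl fun i _ => ?_
          simp [Equiv.coe_addRight]
      _ = ∏ j : ZMod ℓ, W j ω := by rw [← Finset.prod_mul_distrib]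
  -- put everything together
  obtain ⟨hint, hval⟩ := integrable_integral_finset_prod hWm hWind hWint Finset.univ
  have hcard : (Finset.univ.filter fun j : ZMod ℓ => ¬ c (j - 1) = c j).card
      = (Finset.univ.filter fun i : ZMod ℓ => c i ≠ c (i + 1)).card := by
    refine (Finset.card_equiv (Equiv.addRight (1 : ZMod ℓ)) fun i => ?_).symm
    simp [Equiv.coe_addRight, add_sub_cancel_right, ne_eq]
  constructor
  · exact hint.congr hTae.symm
  · calc ∫ ω, (∏ i : ZMod ℓ, T i ω) ∂P
        = ∫ ω, (∏ j : ZMod ℓ, W j ω) ∂P := integral_congr_ae hTae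
      _ = ∏ j : ZMod ℓ, ∫ ω, W j ω ∂P := hval
      _ = ∏ j : ZMod ℓ, (if c (j - 1) = c j then (1:ℝ) else ρ) :=
          Finset.prod_congr rfl fun j _ => hWmean j
      _ = ρ ^ (Finset.univ.filter fun j : ZMod ℓ => ¬ c (j - 1) = c j).card := by
          rw [Finset.prod_ite, Finset.prod_const_one, one_mul, Finset.prod_const]
      _ = _ := by rw [hcard]
end

section
/- Let ε ∈ (0,1), ρ ∈ [0,1], and λ, μ ≥ 0 satisfy λ²(1−ρ²) < 1, μ²(1−ρ²) < 1, and λ²ρ²/(2(1−λ²+λ²ρ²)) + μ²ρ²/(2(1−μ²+μ²ρ²)) < (1−ε)/2. Then there exist constants δ > 0 and C > 0, depending only on ε, λ, μ, ρ, such that for all natural numbers k and l: (λ^{2k} μ^{2l} / (2^{k+l} · k! · l!)) · E[U^{2k} V^{2l}] ≤ C · (1+δ)^{−2(k+l)}. (This is Lemma 5.8; note that if (ζ_j, η_j), 1 ≤ j ≤ n, are i.i.d. pairs of standard normal variables with E[ζ_j η_j] = ρ², then (n^{−1/2}Σ_j ζ_j, n^{−1/2}Σ_j η_j) has exactly the law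 of (U, V), so this is the stated bound on the normalized joint Gaussian moments.) -/
open MeasureTheory ProbabilityTheory Real

lemma aux_pow_le_exp {x : ℝ} (hx : 0 ≤ x) (k : ℕ) : x ^ k ≤ k.factorial * Real.exp x := by
  have h1 : x ^ k / k.factorial ≤ Real.exp x := by
    calc x ^ k / k.factorial ≤ ∑ i ∈ Finset.range (k+1), x ^ i / i.factorial := by
          refine Finset.single_le_sum (f := fun i => x ^ i / (i.factorial : ℝ)) ?_ ?_
          · intro i _; positivity
          · exact Finset.self_mem_range_succ k
      _ ≤ Real.exp x := Real.sum_le_exp_of_nonneg hx _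
  have hk : (0:ℝ) < k.factorial := by exact_mod_cast k.factorial_pos
  rw [div_le_iff₀ hk] at h1
  linarith [h1]

lemma aux_sq_bound (ρ s2 c x y : ℝ) (hs2 : 0 ≤ s2) (hc : 0 < c) :
    (ρ * x + Real.sqrt s2 * y) ^ 2 ≤ (1 + c) * (ρ ^ 2 * x ^ 2) + (1 + 1/c) * (s2 * y ^ 2) := by
  have hs : Real.sqrt s2 ^ 2 = s2 := Real.sq_sqrt hs2
  have h2 : 2 * (ρ * x) * (Real.sqrt s2 * y) ≤ c * (ρ * x) ^ 2 + (1/c) * (Real.sqrt s2 * y) ^ 2 := by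
    have key := sq_nonneg (Real.sqrt c * (ρ * x) - Real.sqrt (1/c) * (Real.sqrt s2 * y))
    have hc1 : Real.sqrt c ^ 2 = c := Real.sq_sqrt hc.le
    have hc2 : Real.sqrt (1/c) ^ 2 = 1/c := Real.sq_sqrt (by positivity)
    have hcc : Real.sqrt c * Real.sqrt (1/c) = 1 := by
      rw [← Real.sqrt_mul hc.le]
      rw [mul_one_div, div_self hc.ne', Real.sqrt_one]
    have expand : (Real.sqrt c * (ρ * x) - Real.sqrt (1/c) * (Real.sqrt s2 * y)) ^ 2
        = Real.sqrt c ^ 2 * (ρ * x) ^ 2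
          - 2 * (Real.sqrt c * Real.sqrt (1/c)) * ((ρ * x) * (Real.sqrt s2 * y))
          + Real.sqrt (1/c) ^ 2 * (Real.sqrt s2 * y) ^ 2 := by ring
    rw [hc1, hc2, hcc] at expand
    rw [expand] at key
    linarith [key]
  have hsy : (Real.sqrt s2 * y) ^ 2 = s2 * y ^ 2 := by rw [mul_pow, hs]
  have hsy2 : (1/c) * (Real.sqrt s2 * y) ^ 2 = (1/c) * (s2 * y ^ 2) := by rw [hsy]
  have expand2 : (ρ * x + Real.sqrt s2 * y) ^ 2
      = ρ ^ 2 * x ^ 2 + 2 * (ρ * x) * (Real.sqrt s2 * y) + (Real.sqrt s2 * y) ^ 2 := by ring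
  rw [expand2]
  have hrg : (1 + c) * (ρ ^ 2 * x ^ 2) + (1 + 1/c) * (s2 * y ^ 2)
      = ρ ^ 2 * x ^ 2 + (c * (ρ * x) ^ 2 + (s2 * y ^ 2 + (1/c) * (s2 * y ^ 2))) := by ring
  rw [hrg]
  linarith [h2, hsy, hsy2]

lemma aux_int_gauss {c : ℝ} (hc : c < 1/2) :
    Integrable (fun x => Real.exp (c * x ^ 2)) (gaussianReal 0 1) := by
  rw [gaussianReal_of_var_ne_zero _ one_ne_zero]
  rw [integrable_withDensity_iff (measurable_gaussianPDF 0 1)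
    (Filter.Eventually.of_forall fun x => ENNReal.ofReal_lt_top)]
  have heq : ∀ x : ℝ, Real.exp (c * x ^ 2) * (gaussianPDF 0 1 x).toReal
      = (Real.sqrt (2 * Real.pi))⁻¹ * Real.exp (-(1/2 - c) * x ^ 2) := by
    intro x
    rw [gaussianPDF_def, ENNReal.toReal_ofReal (gaussianPDFReal_nonneg _ _ _), gaussianPDFReal]
    push_cast
    rw [mul_one, sub_zero, mul_left_comm, ← Real.exp_add]
    congr 1
    ring
  refine Integrable.congr ?_ (Filter.EventuallyEq.symm (Filter.Eventually.of_forall heq))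
  exact (integrable_exp_neg_mul_sq (by linarith)).const_mul _

lemma aux_integrable_exp_sq {Ω : Type*} [MeasurableSpace Ω] {P : Measure Ω} {X : Ω → ℝ}
    (hXm : AEMeasurable X P) (hmap : Measure.map X P = gaussianReal 0 1)
    {c : ℝ} (hc : c < 1/2) : Integrable (fun ω => Real.exp (c * X ω ^ 2)) P := by
  have h := aux_int_gauss hc
  rw [← hmap] at h
  have hsm : AEStronglyMeasurable (fun x : ℝ => Real.exp (c * x ^ 2)) (Measure.map X P) :=
    (Real.continuous_exp.comp (continuous_const.mul (continuous_pow 2))).aestronglyMeasurable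
  exact (integrable_map_measure hsm hXm).mp h

lemma aux_iIndepFun_congr {Ω ι : Type*} [MeasurableSpace Ω] {P : Measure Ω} {β : ι → Type*}
    [m : ∀ i, MeasurableSpace (β i)] {f g : ∀ i, Ω → β i}
    (h : iIndepFun f P) (hfg : ∀ i, f i =ᵐ[P] g i) : iIndepFun g P := by
  rw [iIndepFun_iff_measure_inter_preimage_eq_mul] at h ⊢
  intro S sets hsets
  have hset : ∀ i ∈ (S : Set ι), (f i ⁻¹' sets i : Set Ω) =ᵐ[P] (g i ⁻¹' sets i) := by
    intro i _
    filter_upwards [hfg i] with ω hω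
    show (f i ω ∈ sets i) = (g i ω ∈ sets i)
    rw [hω]
  calc P (⋂ i ∈ S, g i ⁻¹' sets i) = P (⋂ i ∈ S, f i ⁻¹' sets i) :=
        (measure_congr (EventuallyEq.countable_bInter S.countable_toSet
          (fun i hi => hset i hi))).symm
    _ = ∏ i ∈ S, P (f i ⁻¹' sets i) := h S hsets
    _ = ∏ i ∈ S, P (g i ⁻¹' sets i) :=
        Finset.prod_congr rfl fun i hi => measure_congr (hset i hi)

lemma aux_prod_int {Ω : Type*} [MeasurableSpace Ω] (P : Measure Ω) [IsProbabilityMeasure P]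
    (X Y W : Ω → ℝ) (hXm : Measurable X) (hYm : Measurable Y) (hWm : Measurable W)
    (hX : Measure.map X P = gaussianReal 0 1) (hY : Measure.map Y P = gaussianReal 0 1)
    (hW : Measure.map W P = gaussianReal 0 1)
    (hindep : iIndepFun ![X, Y, W] P)
    {c₀ c₁ c₂ : ℝ} (h₀ : c₀ < 1/2) (h₁ : c₁ < 1/2) (h₂ : c₂ < 1/2) :
    Integrable (fun ω => Real.exp (c₀ * X ω ^ 2) * Real.exp (c₁ * Y ω ^ 2)
      * Real.exp (c₂ * W ω ^ 2)) P := by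
  have hmeas : ∀ i, Measurable (![X, Y, W] i) := by
    intro i; fin_cases i <;> assumption
  have intX : Integrable (fun ω => Real.exp (c₀ * X ω ^ 2)) P :=
    aux_integrable_exp_sq hXm.aemeasurable hX h₀
  have intY : Integrable (fun ω => Real.exp (c₁ * Y ω ^ 2)) P :=
    aux_integrable_exp_sq hYm.aemeasurable hY h₁
  have intW : Integrable (fun ω => Real.exp (c₂ * W ω ^ 2)) P :=
    aux_integrable_exp_sq hWm.aemeasurable hW h₂
  have iXY : IndepFun X Y P := by
    have := hindep.indepFun (show (0 : Fin 3) ≠ 1 by decide)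
    simpa using this
  have mφ : Measurable (fun x : ℝ => Real.exp (c₀ * x ^ 2)) := by fun_prop
  have mψ : Measurable (fun x : ℝ => Real.exp (c₁ * x ^ 2)) := by fun_prop
  have mχ : Measurable (fun x : ℝ => Real.exp (c₂ * x ^ 2)) := by fun_prop
  have e01 : IndepFun (fun ω => Real.exp (c₀ * X ω ^ 2)) (fun ω => Real.exp (c₁ * Y ω ^ 2)) P :=
    iXY.comp mφ mψ
  have intXY : Integrable (fun ω => Real.exp (c₀ * X ω ^ 2) * Real.exp (c₁ * Y ω ^ 2)) P :=
    e01.integrable_mul intX intY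
  have ip : IndepFun (fun ω => (X ω, Y ω)) W P := by
    have := hindep.indepFun_prodMk hmeas 0 1 2 (by decide) (by decide)
    simpa using this
  have e012 : IndepFun (fun ω => Real.exp (c₀ * X ω ^ 2) * Real.exp (c₁ * Y ω ^ 2))
      (fun ω => Real.exp (c₂ * W ω ^ 2)) P :=
    ip.comp (show Measurable (fun p : ℝ × ℝ => Real.exp (c₀ * p.1 ^ 2) * Real.exp (c₁ * p.2 ^ 2))
      by fun_prop) mχ
  exact e012.integrable_mul intXY intW

set_option maxHeartbeats 1600000 in
/-- Lemma 5.8.  Let `Z, G₁, G₂` be independent standard Gaussians, and set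
`U = ρZ + √(1−ρ²)G₁`, `V = ρZ + √(1−ρ²)G₂`, a centered bivariate Gaussian pair with unit
variances and correlation `ρ²`.  Let `ε ∈ (0,1)`, `ρ ∈ [0,1]`, `λ, μ ≥ 0` with
`λ²(1−ρ²) < 1`, `μ²(1−ρ²) < 1` and
`λ²ρ²/(2(1−λ²+λ²ρ²)) + μ²ρ²/(2(1−μ²+μ²ρ²)) < (1−ε)/2`.  Then there are constants
`δ > 0` and `C > 0` (depending only on `ε, λ, μ, ρ`) such that for all `k, l : ℕ`,
`(λ^{2k} μ^{2l} / (2^{k+l} k! l!)) · E[U^{2k} V^{2l}] ≤ C (1+δ)^{−2(k+l)}`. -/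
theorem stmt10 {Ω : Type*} [MeasurableSpace Ω] (P : Measure Ω) [IsProbabilityMeasure P]
    (Z G₁ G₂ : Ω → ℝ)
    (hZ : Measure.map Z P = gaussianReal 0 1)
    (hG₁ : Measure.map G₁ P = gaussianReal 0 1)
    (hG₂ : Measure.map G₂ P = gaussianReal 0 1)
    (hindep : iIndepFun ![Z, G₁, G₂] P)
    (rho lam mu eps : ℝ)
    (hrho : 0 ≤ rho ∧ rho ≤ 1) (heps : 0 < eps ∧ eps < 1)
    (hlam : 0 ≤ lam) (hmu : 0 ≤ mu)
    (hlam1 : lam ^ 2 * (1 - rho ^ 2) < 1) (hmu1 : mu ^ 2 * (1 - rho ^ 2) < 1)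
    (hF : lam ^ 2 * rho ^ 2 / (2 * (1 - lam ^ 2 + lam ^ 2 * rho ^ 2))
        + mu ^ 2 * rho ^ 2 / (2 * (1 - mu ^ 2 + mu ^ 2 * rho ^ 2)) < (1 - eps) / 2)
    (U V : Ω → ℝ)
    (hU : ∀ ω, U ω = rho * Z ω + Real.sqrt (1 - rho ^ 2) * G₁ ω)
    (hV : ∀ ω, V ω = rho * Z ω + Real.sqrt (1 - rho ^ 2) * G₂ ω) :
    ∃ δ : ℝ, 0 < δ ∧ ∃ C : ℝ, 0 < C ∧ ∀ k l : ℕ,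
      Integrable (fun ω => U ω ^ (2 * k) * V ω ^ (2 * l)) P ∧
      lam ^ (2 * k) * mu ^ (2 * l)
          / (2 ^ (k + l) * (Nat.factorial k : ℝ) * (Nat.factorial l : ℝ))
          * ∫ ω, U ω ^ (2 * k) * V ω ^ (2 * l) ∂P
        ≤ C * ((1 + δ) ^ (2 * (k + l)))⁻¹ := by
  obtain ⟨hrho0, hrho1⟩ := hrho
  obtain ⟨heps0, heps1⟩ := heps
  -- measurable modifications
  have hPne : (gaussianReal 0 1 : Measure ℝ) ≠ 0 := IsProbabilityMeasure.ne_zero _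
  have hZae : AEMeasurable Z P := by
    by_contra h; rw [Measure.map_of_not_aemeasurable h] at hZ; exact hPne hZ.symm
  have hG₁ae : AEMeasurable G₁ P := by
    by_contra h; rw [Measure.map_of_not_aemeasurable h] at hG₁; exact hPne hG₁.symm
  have hG₂ae : AEMeasurable G₂ P := by
    by_contra h; rw [Measure.map_of_not_aemeasurable h] at hG₂; exact hPne hG₂.symm
  obtain ⟨Z', hZ'm, hZZ'⟩ : ∃ Z' : Ω → ℝ, Measurable Z' ∧ Z =ᵐ[P] Z' :=
    ⟨hZae.mk Z, hZae.measurable_mk, hZae.ae_eq_mk⟩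
  obtain ⟨X', hX'm, hXX'⟩ : ∃ X' : Ω → ℝ, Measurable X' ∧ G₁ =ᵐ[P] X' :=
    ⟨hG₁ae.mk G₁, hG₁ae.measurable_mk, hG₁ae.ae_eq_mk⟩
  obtain ⟨Y', hY'm, hYY'⟩ : ∃ Y' : Ω → ℝ, Measurable Y' ∧ G₂ =ᵐ[P] Y' :=
    ⟨hG₂ae.mk G₂, hG₂ae.measurable_mk, hG₂ae.ae_eq_mk⟩
  have hZ' : Measure.map Z' P = gaussianReal 0 1 := by rw [← Measure.map_congr hZZ']; exact hZ
  have hX' : Measure.map X' P = gaussianReal 0 1 := by rw [← Measure.map_congr hXX']; exact hG₁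
  have hY' : Measure.map Y' P = gaussianReal 0 1 := by rw [← Measure.map_congr hYY']; exact hG₂
  have hindep' : iIndepFun ![Z', X', Y'] P := by
    refine aux_iIndepFun_congr hindep ?_
    intro i
    fin_cases i
    · simpa using hZZ'
    · simpa using hXX'
    · simpa using hYY'
  -- scalar constants
  obtain ⟨s2, hs2def⟩ : ∃ t : ℝ, t = 1 - rho ^ 2 := ⟨_, rfl⟩
  have hr1 : rho ^ 2 ≤ 1 := by nlinarith
  have hs2 : 0 ≤ s2 := by rw [hs2def]; linarith
  have hs2le : s2 ≤ 1 := by rw [hs2def]; nlinarith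
  obtain ⟨L, hLdef⟩ : ∃ t : ℝ, t = lam ^ 2 * s2 := ⟨_, rfl⟩
  obtain ⟨M, hMdef⟩ : ∃ t : ℝ, t = mu ^ 2 * s2 := ⟨_, rfl⟩
  have hL0 : 0 ≤ L := by rw [hLdef]; exact mul_nonneg (sq_nonneg _) hs2
  have hM0 : 0 ≤ M := by rw [hMdef]; exact mul_nonneg (sq_nonneg _) hs2
  have hL1 : L < 1 := by rw [hLdef, hs2def]; exact hlam1
  have hM1 : M < 1 := by rw [hMdef, hs2def]; exact hmu1
  have hL1' : (0:ℝ) < 1 - L := by linarith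
  have hM1' : (0:ℝ) < 1 - M := by linarith
  obtain ⟨c, hcdef⟩ : ∃ t : ℝ, t = eps / (2 * (lam ^ 2 + mu ^ 2) + 2) := ⟨_, rfl⟩
  have hc0 : 0 < c := by rw [hcdef]; positivity
  obtain ⟨cl, hcldef⟩ : ∃ t : ℝ, t = L / (1 - L) + c := ⟨_, rfl⟩
  obtain ⟨cm, hcmdef⟩ : ∃ t : ℝ, t = M / (1 - M) + c := ⟨_, rfl⟩
  have hcl0 : 0 < cl := by
    rw [hcldef]; exact add_pos_of_nonneg_of_pos (div_nonneg hL0 hL1'.le) hc0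
  have hcm0 : 0 < cm := by
    rw [hcmdef]; exact add_pos_of_nonneg_of_pos (div_nonneg hM0 hM1'.le) hc0
  obtain ⟨m₀, hm₀def⟩ : ∃ t : ℝ, t = rho ^ 2 * (lam ^ 2 * (1 + cl) + mu ^ 2 * (1 + cm)) :=
    ⟨_, rfl⟩
  obtain ⟨m₁, hm₁def⟩ : ∃ t : ℝ, t = L * (1 + 1 / cl) := ⟨_, rfl⟩
  obtain ⟨m₂, hm₂def⟩ : ∃ t : ℝ, t = M * (1 + 1 / cm) := ⟨_, rfl⟩
  have hm₀0 : 0 ≤ m₀ := by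
    rw [hm₀def]
    exact mul_nonneg (sq_nonneg _) (add_nonneg
      (mul_nonneg (sq_nonneg _) (by linarith)) (mul_nonneg (sq_nonneg _) (by linarith)))
  have hm₁0 : 0 ≤ m₁ := by
    rw [hm₁def]
    exact mul_nonneg hL0 (add_nonneg zero_le_one (one_div_nonneg.mpr hcl0.le))
  have hm₂0 : 0 ≤ m₂ := by
    rw [hm₂def]
    exact mul_nonneg hM0 (add_nonneg zero_le_one (one_div_nonneg.mpr hcm0.le))
  -- m₀ < 1 - eps/2
  have hm₀ : m₀ < 1 - eps / 2 := by
    have key : m₀ = 2 * (lam ^ 2 * rho ^ 2 / (2 * (1 - lam ^ 2 + lam ^ 2 * rho ^ 2))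
        + mu ^ 2 * rho ^ 2 / (2 * (1 - mu ^ 2 + mu ^ 2 * rho ^ 2)))
        + rho ^ 2 * (lam ^ 2 + mu ^ 2) * c := by
      have e1 : 1 - lam ^ 2 + lam ^ 2 * rho ^ 2 = 1 - L := by rw [hLdef, hs2def]; ring
      have e2 : 1 - mu ^ 2 + mu ^ 2 * rho ^ 2 = 1 - M := by rw [hMdef, hs2def]; ring
      rw [hm₀def, hcldef, hcmdef, e1, e2]
      field_simp [hL1'.ne', hM1'.ne']
      ring
    have htail : rho ^ 2 * (lam ^ 2 + mu ^ 2) * c < eps / 2 := by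
      have h0 : 0 ≤ (lam ^ 2 + mu ^ 2) * c := mul_nonneg (by positivity) hc0.le
      have h1 : rho ^ 2 * ((lam ^ 2 + mu ^ 2) * c) ≤ 1 * ((lam ^ 2 + mu ^ 2) * c) :=
        mul_le_mul_of_nonneg_right hr1 h0
      have h2 : (lam ^ 2 + mu ^ 2) * c < eps / 2 := by
        rw [hcdef, ← mul_div_assoc, div_lt_div_iff₀ (by positivity) (by norm_num)]
        linarith
      calc rho ^ 2 * (lam ^ 2 + mu ^ 2) * c = rho ^ 2 * ((lam ^ 2 + mu ^ 2) * c) := by ring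
        _ ≤ 1 * ((lam ^ 2 + mu ^ 2) * c) := h1
        _ = (lam ^ 2 + mu ^ 2) * c := one_mul _
        _ < eps / 2 := h2
    have hsum : 2 * (lam ^ 2 * rho ^ 2 / (2 * (1 - lam ^ 2 + lam ^ 2 * rho ^ 2))
        + mu ^ 2 * rho ^ 2 / (2 * (1 - mu ^ 2 + mu ^ 2 * rho ^ 2))) < 1 - eps := by linarith
    rw [key]
    linarith
  -- m₁ < 1, m₂ < 1
  have hm₁ : m₁ < 1 := by
    rcases eq_or_lt_of_le hL0 with h | h
    · rw [hm₁def, ← h]; norm_num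
    · have hlt : L / cl < 1 - L := by
        rw [div_lt_iff₀ hcl0]
        have he : (1 - L) * cl = L + c * (1 - L) := by
          rw [hcldef]; field_simp
        linarith [mul_pos hc0 hL1']
      have he2 : m₁ = L + L / cl := by rw [hm₁def, mul_add, mul_one, mul_one_div]
      linarith
  have hm₂ : m₂ < 1 := by
    rcases eq_or_lt_of_le hM0 with h | h
    · rw [hm₂def, ← h]; norm_num
    · have hlt : M / cm < 1 - M := by
        rw [div_lt_iff₀ hcm0]
        have he : (1 - M) * cm = M + c * (1 - M) := by
          rw [hcmdef]; field_simp
        linarith [mul_pos hc0 hM1']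
      have he2 : m₂ = M + M / cm := by rw [hm₂def, mul_add, mul_one, mul_one_div]
      linarith
  -- M₀, D, δ
  obtain ⟨M₀, hM₀def⟩ : ∃ t : ℝ, t = max (max m₀ m₁) (max m₂ (1/2)) := ⟨_, rfl⟩
  have hM₀l : (1:ℝ)/2 ≤ M₀ := by
    rw [hM₀def]; exact le_max_of_le_right (le_max_right _ _)
  have hM₀0 : 0 < M₀ := lt_of_lt_of_le (by norm_num) hM₀l
  have hM₀u : M₀ < 1 := by
    rw [hM₀def]
    exact max_lt (max_lt (by linarith) hm₁) (max_lt hm₂ (by norm_num))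
  have hm₀M : m₀ ≤ M₀ := by rw [hM₀def]; exact le_max_of_le_left (le_max_left _ _)
  have hm₁M : m₁ ≤ M₀ := by rw [hM₀def]; exact le_max_of_le_left (le_max_right _ _)
  have hm₂M : m₂ ≤ M₀ := by rw [hM₀def]; exact le_max_of_le_right (le_max_left _ _)
  obtain ⟨D, hDdef⟩ : ∃ t : ℝ, t = (1 + 1 / M₀) / 2 := ⟨_, rfl⟩
  have hD1 : 1 < D := by
    have := one_lt_one_div hM₀0 hM₀u
    rw [hDdef]; linarith
  have hD0 : 0 < D := by linarith
  have hDM : D * M₀ < 1 := by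
    have he : D * M₀ = (M₀ + 1) / 2 := by
      rw [hDdef]; field_simp [hM₀0.ne']
    rw [he]; linarith
  obtain ⟨δ, hδdef⟩ : ∃ t : ℝ, t = Real.sqrt D - 1 := ⟨_, rfl⟩
  have hδ0 : 0 < δ := by
    have h1 : Real.sqrt 1 < Real.sqrt D := Real.sqrt_lt_sqrt zero_le_one hD1
    rw [Real.sqrt_one] at h1
    rw [hδdef]
    linarith
  have hδsq : (1 + δ) ^ 2 = D := by
    rw [hδdef, show 1 + (Real.sqrt D - 1) = Real.sqrt D from by ring, Real.sq_sqrt hD0.le]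
  -- coefficients for the main exponential bound
  obtain ⟨A, hAdef⟩ : ∃ t : ℝ, t = D * lam ^ 2 / 2 := ⟨_, rfl⟩
  obtain ⟨B, hBdef⟩ : ∃ t : ℝ, t = D * mu ^ 2 / 2 := ⟨_, rfl⟩
  have hA0 : 0 ≤ A := by
    rw [hAdef]; exact div_nonneg (mul_nonneg hD0.le (sq_nonneg _)) (by norm_num)
  have hB0 : 0 ≤ B := by
    rw [hBdef]; exact div_nonneg (mul_nonneg hD0.le (sq_nonneg _)) (by norm_num)
  obtain ⟨d₀, hd₀def⟩ : ∃ t : ℝ, t = D * m₀ / 2 := ⟨_, rfl⟩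
  obtain ⟨d₁, hd₁def⟩ : ∃ t : ℝ, t = D * m₁ / 2 := ⟨_, rfl⟩
  obtain ⟨d₂, hd₂def⟩ : ∃ t : ℝ, t = D * m₂ / 2 := ⟨_, rfl⟩
  have hd₀0 : 0 ≤ d₀ := by
    rw [hd₀def]; exact div_nonneg (mul_nonneg hD0.le hm₀0) (by norm_num)
  have hd₁0 : 0 ≤ d₁ := by
    rw [hd₁def]; exact div_nonneg (mul_nonneg hD0.le hm₁0) (by norm_num)
  have hd₂0 : 0 ≤ d₂ := by
    rw [hd₂def]; exact div_nonneg (mul_nonneg hD0.le hm₂0) (by norm_num)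
  have hDm : ∀ m : ℝ, m ≤ M₀ → D * m / 2 < 1 / 2 := by
    intro m hmM
    have : D * m ≤ D * M₀ := mul_le_mul_of_nonneg_left hmM hD0.le
    linarith
  have hd₀ : d₀ < 1/2 := by rw [hd₀def]; exact hDm m₀ hm₀M
  have hd₁ : d₁ < 1/2 := by rw [hd₁def]; exact hDm m₁ hm₁M
  have hd₂ : d₂ < 1/2 := by rw [hd₂def]; exact hDm m₂ hm₂M
  -- the dominating functions
  obtain ⟨F, hFdef⟩ : ∃ F : Ω → ℝ, F = fun ω => Real.exp (d₀ * Z' ω ^ 2)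
      * Real.exp (d₁ * X' ω ^ 2) * Real.exp (d₂ * Y' ω ^ 2) := ⟨_, rfl⟩
  have hFint : Integrable F P := by
    rw [hFdef]
    exact aux_prod_int P Z' X' Y' hZ'm hX'm hY'm hZ' hX' hY' hindep' hd₀ hd₁ hd₂
  obtain ⟨F₂, hF₂def⟩ : ∃ F₂ : Ω → ℝ, F₂ = fun ω => Real.exp (rho ^ 2 / 4 * Z' ω ^ 2)
      * Real.exp (s2 / 8 * X' ω ^ 2) * Real.exp (s2 / 8 * Y' ω ^ 2) := ⟨_, rfl⟩
  have hF₂int : Integrable F₂ P := by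
    rw [hF₂def]
    exact aux_prod_int P Z' X' Y' hZ'm hX'm hY'm hZ' hX' hY' hindep'
      (by linarith) (by linarith) (by linarith)
  obtain ⟨C, hCdef⟩ : ∃ t : ℝ, t = ∫ ω, F ω ∂P := ⟨_, rfl⟩
  have hC1 : 1 ≤ C := by
    rw [hCdef]
    calc (1:ℝ) = ∫ _ω, (1:ℝ) ∂P := by simp
      _ ≤ ∫ ω, F ω ∂P := by
          refine integral_mono (integrable_const 1) hFint ?_
          intro ω
          simp only [hFdef]
          have h1 : 1 ≤ Real.exp (d₀ * Z' ω ^ 2) :=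
            Real.one_le_exp (mul_nonneg hd₀0 (sq_nonneg _))
          have h2 : 1 ≤ Real.exp (d₁ * X' ω ^ 2) :=
            Real.one_le_exp (mul_nonneg hd₁0 (sq_nonneg _))
          have h3 : 1 ≤ Real.exp (d₂ * Y' ω ^ 2) :=
            Real.one_le_exp (mul_nonneg hd₂0 (sq_nonneg _))
          calc (1:ℝ) = 1 * 1 * 1 := by norm_num
            _ ≤ Real.exp (d₀ * Z' ω ^ 2) * Real.exp (d₁ * X' ω ^ 2)
                * Real.exp (d₂ * Y' ω ^ 2) := by
              apply mul_le_mul (mul_le_mul h1 h2 zero_le_one (by positivity)) h3 zero_le_one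
              positivity
  -- primed U, V
  obtain ⟨U', hU'def⟩ : ∃ f : Ω → ℝ, f = fun ω => rho * Z' ω + Real.sqrt s2 * X' ω := ⟨_, rfl⟩
  obtain ⟨V', hV'def⟩ : ∃ f : Ω → ℝ, f = fun ω => rho * Z' ω + Real.sqrt s2 * Y' ω := ⟨_, rfl⟩
  have hU'm : Measurable U' := by
    rw [hU'def]; exact (hZ'm.const_mul _).add (hX'm.const_mul _)
  have hV'm : Measurable V' := by
    rw [hV'def]; exact (hZ'm.const_mul _).add (hY'm.const_mul _)
  have hUU' : U =ᵐ[P] U' := by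
    filter_upwards [hZZ', hXX'] with ω h1 h2
    rw [hU ω, h1, h2, ← hs2def, hU'def]
  have hVV' : V =ᵐ[P] V' := by
    filter_upwards [hZZ', hYY'] with ω h1 h2
    rw [hV ω, h1, h2, ← hs2def, hV'def]
  -- quadratic bounds
  have hsqU : ∀ ω, U' ω ^ 2 ≤ (1 + cl) * (rho ^ 2 * Z' ω ^ 2) + (1 + 1/cl) * (s2 * X' ω ^ 2) := by
    intro ω
    rw [hU'def]
    exact aux_sq_bound rho s2 cl (Z' ω) (X' ω) hs2 hcl0
  have hsqV : ∀ ω, V' ω ^ 2 ≤ (1 + cm) * (rho ^ 2 * Z' ω ^ 2) + (1 + 1/cm) * (s2 * Y' ω ^ 2) := by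
    intro ω
    rw [hV'def]
    exact aux_sq_bound rho s2 cm (Z' ω) (Y' ω) hs2 hcm0
  have hsqU2 : ∀ ω, U' ω ^ 2 ≤ 2 * (rho ^ 2 * Z' ω ^ 2) + 2 * (s2 * X' ω ^ 2) := by
    intro ω
    have h := aux_sq_bound rho s2 1 (Z' ω) (X' ω) hs2 one_pos
    norm_num at h
    simp only [hU'def]
    linarith [h]
  have hsqV2 : ∀ ω, V' ω ^ 2 ≤ 2 * (rho ^ 2 * Z' ω ^ 2) + 2 * (s2 * Y' ω ^ 2) := by
    intro ω
    have h := aux_sq_bound rho s2 1 (Z' ω) (Y' ω) hs2 one_pos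
    norm_num at h
    simp only [hV'def]
    linarith [h]
  refine ⟨δ, hδ0, C, by linarith, fun k l => ?_⟩
  -- integrability of U'^{2k} V'^{2l}
  have hptInt : ∀ ω, U' ω ^ (2 * k) * V' ω ^ (2 * l)
      ≤ (k.factorial * l.factorial * 16 ^ (k + l)) * F₂ ω := by
    intro ω
    have hu : (0:ℝ) ≤ U' ω ^ 2 := sq_nonneg _
    have hv : (0:ℝ) ≤ V' ω ^ 2 := sq_nonneg _
    have e1 : (U' ω ^ 2 / 16) ^ k ≤ k.factorial * Real.exp (U' ω ^ 2 / 16) :=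
      aux_pow_le_exp (by positivity) k
    have e2 : (V' ω ^ 2 / 16) ^ l ≤ l.factorial * Real.exp (V' ω ^ 2 / 16) :=
      aux_pow_le_exp (by positivity) l
    have e1' : U' ω ^ (2 * k) ≤ k.factorial * 16 ^ k * Real.exp (U' ω ^ 2 / 16) := by
      rw [pow_mul]
      have he : (U' ω ^ 2) ^ k = (U' ω ^ 2 / 16) ^ k * 16 ^ k := by
        rw [div_pow]; field_simp
      rw [he]
      calc (U' ω ^ 2 / 16) ^ k * 16 ^ k
          ≤ (k.factorial * Real.exp (U' ω ^ 2 / 16)) * 16 ^ k :=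
            mul_le_mul_of_nonneg_right e1 (by positivity)
        _ = k.factorial * 16 ^ k * Real.exp (U' ω ^ 2 / 16) := by ring
    have e2' : V' ω ^ (2 * l) ≤ l.factorial * 16 ^ l * Real.exp (V' ω ^ 2 / 16) := by
      rw [pow_mul]
      have he : (V' ω ^ 2) ^ l = (V' ω ^ 2 / 16) ^ l * 16 ^ l := by
        rw [div_pow]; field_simp
      rw [he]
      calc (V' ω ^ 2 / 16) ^ l * 16 ^ l
          ≤ (l.factorial * Real.exp (V' ω ^ 2 / 16)) * 16 ^ l :=
            mul_le_mul_of_nonneg_right e2 (by positivity)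
        _ = l.factorial * 16 ^ l * Real.exp (V' ω ^ 2 / 16) := by ring
    have hprod : U' ω ^ (2 * k) * V' ω ^ (2 * l)
        ≤ (k.factorial * 16 ^ k * Real.exp (U' ω ^ 2 / 16))
          * (l.factorial * 16 ^ l * Real.exp (V' ω ^ 2 / 16)) := by
      apply mul_le_mul e1' e2' (by rw [pow_mul]; positivity) (by positivity)
    have hexp : Real.exp (U' ω ^ 2 / 16) * Real.exp (V' ω ^ 2 / 16) ≤ F₂ ω := by
      rw [← Real.exp_add]
      have hb : U' ω ^ 2 / 16 + V' ω ^ 2 / 16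
          ≤ rho ^ 2 / 4 * Z' ω ^ 2 + (s2 / 8 * X' ω ^ 2 + s2 / 8 * Y' ω ^ 2) := by
        have hbu := hsqU2 ω
        have hbv := hsqV2 ω
        linarith [hbu, hbv]
      calc Real.exp (U' ω ^ 2 / 16 + V' ω ^ 2 / 16)
          ≤ Real.exp (rho ^ 2 / 4 * Z' ω ^ 2 + (s2 / 8 * X' ω ^ 2 + s2 / 8 * Y' ω ^ 2)) :=
            Real.exp_le_exp.mpr hb
        _ = F₂ ω := by
            simp only [hF₂def]
            rw [← Real.exp_add, ← Real.exp_add]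
            congr 1
            ring
    calc U' ω ^ (2 * k) * V' ω ^ (2 * l)
        ≤ (k.factorial * 16 ^ k * Real.exp (U' ω ^ 2 / 16))
          * (l.factorial * 16 ^ l * Real.exp (V' ω ^ 2 / 16)) := hprod
      _ = (k.factorial * l.factorial * (16 ^ k * 16 ^ l))
          * (Real.exp (U' ω ^ 2 / 16) * Real.exp (V' ω ^ 2 / 16)) := by ring
      _ ≤ (k.factorial * l.factorial * (16 ^ k * 16 ^ l)) * F₂ ω := by
          apply mul_le_mul_of_nonneg_left hexp (by positivity)
      _ = (k.factorial * l.factorial * 16 ^ (k + l)) * F₂ ω := by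
          rw [pow_add]
  have hint' : Integrable (fun ω => U' ω ^ (2 * k) * V' ω ^ (2 * l)) P := by
    refine Integrable.mono' ((hF₂int.const_mul (k.factorial * l.factorial * 16 ^ (k + l)))) ?_ ?_
    · exact ((hU'm.pow_const _).mul (hV'm.pow_const _)).aestronglyMeasurable
    · refine Filter.Eventually.of_forall fun ω => ?_
      rw [Real.norm_eq_abs, abs_of_nonneg (by
        rw [pow_mul, pow_mul]; positivity)]
      exact hptInt ω
  have hintUV : Integrable (fun ω => U ω ^ (2 * k) * V ω ^ (2 * l)) P := by
    refine hint'.congr ?_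
    filter_upwards [hUU', hVV'] with ω h1 h2
    rw [h1, h2]
  refine ⟨hintUV, ?_⟩
  -- main pointwise bound
  have hpt : ∀ ω, lam ^ (2 * k) * mu ^ (2 * l)
      / (2 ^ (k + l) * (Nat.factorial k : ℝ) * (Nat.factorial l : ℝ))
      * (U' ω ^ (2 * k) * V' ω ^ (2 * l)) ≤ (D ^ (k + l))⁻¹ * F ω := by
    intro ω
    have hu : (0:ℝ) ≤ U' ω ^ 2 := sq_nonneg _
    have hv : (0:ℝ) ≤ V' ω ^ 2 := sq_nonneg _
    have hkf : (0:ℝ) < (Nat.factorial k : ℝ) := by exact_mod_cast k.factorial_pos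
    have hlf : (0:ℝ) < (Nat.factorial l : ℝ) := by exact_mod_cast l.factorial_pos
    have h1 : lam ^ (2 * k) * (U' ω ^ 2) ^ k / (2 ^ k * (Nat.factorial k : ℝ))
        ≤ (D ^ k)⁻¹ * Real.exp (A * U' ω ^ 2) := by
      have e : lam ^ (2 * k) * (U' ω ^ 2) ^ k / (2 ^ k * (Nat.factorial k : ℝ))
          = (A * U' ω ^ 2) ^ k / (Nat.factorial k : ℝ) * (D ^ k)⁻¹ := by
        rw [pow_mul, hAdef]
        field_simp [hkf.ne', hD0.ne']
        rw [div_pow, mul_div_assoc', mul_comm ((2:ℝ) ^ k), mul_div_assoc, div_self (by positivity), mul_one, mul_pow, mul_pow]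
      rw [e]
      have hple := aux_pow_le_exp (mul_nonneg hA0 hu) k
      have h2 : (A * U' ω ^ 2) ^ k / (Nat.factorial k : ℝ) ≤ Real.exp (A * U' ω ^ 2) := by
        rw [div_le_iff₀ hkf]
        linarith [hple]
      calc (A * U' ω ^ 2) ^ k / (Nat.factorial k : ℝ) * (D ^ k)⁻¹
          ≤ Real.exp (A * U' ω ^ 2) * (D ^ k)⁻¹ :=
            mul_le_mul_of_nonneg_right h2 (by positivity)
        _ = (D ^ k)⁻¹ * Real.exp (A * U' ω ^ 2) := by ring
    have h2 : mu ^ (2 * l) * (V' ω ^ 2) ^ l / (2 ^ l * (Nat.factorial l : ℝ))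
        ≤ (D ^ l)⁻¹ * Real.exp (B * V' ω ^ 2) := by
      have e : mu ^ (2 * l) * (V' ω ^ 2) ^ l / (2 ^ l * (Nat.factorial l : ℝ))
          = (B * V' ω ^ 2) ^ l / (Nat.factorial l : ℝ) * (D ^ l)⁻¹ := by
        rw [pow_mul, hBdef]
        field_simp [hlf.ne', hD0.ne']
        rw [div_pow, mul_div_assoc', mul_comm ((2:ℝ) ^ l), mul_div_assoc, div_self (by positivity), mul_one, mul_pow, mul_pow]
      rw [e]
      have hple := aux_pow_le_exp (mul_nonneg hB0 hv) l
      have h2' : (B * V' ω ^ 2) ^ l / (Nat.factorial l : ℝ) ≤ Real.exp (B * V' ω ^ 2) := by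
        rw [div_le_iff₀ hlf]
        linarith [hple]
      calc (B * V' ω ^ 2) ^ l / (Nat.factorial l : ℝ) * (D ^ l)⁻¹
          ≤ Real.exp (B * V' ω ^ 2) * (D ^ l)⁻¹ :=
            mul_le_mul_of_nonneg_right h2' (by positivity)
        _ = (D ^ l)⁻¹ * Real.exp (B * V' ω ^ 2) := by ring
    have hsplit : lam ^ (2 * k) * mu ^ (2 * l)
        / (2 ^ (k + l) * (Nat.factorial k : ℝ) * (Nat.factorial l : ℝ))
        * (U' ω ^ (2 * k) * V' ω ^ (2 * l))
        = (lam ^ (2 * k) * (U' ω ^ 2) ^ k / (2 ^ k * (Nat.factorial k : ℝ)))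
          * (mu ^ (2 * l) * (V' ω ^ 2) ^ l / (2 ^ l * (Nat.factorial l : ℝ))) := by
      rw [pow_mul (U' ω) 2 k, pow_mul (V' ω) 2 l, pow_add (2:ℝ) k l]
      field_simp
    rw [hsplit]
    have hexpb : Real.exp (A * U' ω ^ 2) * Real.exp (B * V' ω ^ 2) ≤ F ω := by
      rw [← Real.exp_add]
      have hcoef : A * ((1 + cl) * (rho ^ 2 * Z' ω ^ 2) + (1 + 1/cl) * (s2 * X' ω ^ 2))
          + B * ((1 + cm) * (rho ^ 2 * Z' ω ^ 2) + (1 + 1/cm) * (s2 * Y' ω ^ 2))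
          = d₀ * Z' ω ^ 2 + (d₁ * X' ω ^ 2 + d₂ * Y' ω ^ 2) := by
        rw [hAdef, hBdef, hd₀def, hd₁def, hd₂def, hm₀def, hm₁def, hm₂def, hLdef, hMdef]
        ring
      have hb : A * U' ω ^ 2 + B * V' ω ^ 2
          ≤ d₀ * Z' ω ^ 2 + (d₁ * X' ω ^ 2 + d₂ * Y' ω ^ 2) := by
        rw [← hcoef]
        have b1 := mul_le_mul_of_nonneg_left (hsqU ω) hA0
        have b2 := mul_le_mul_of_nonneg_left (hsqV ω) hB0
        linarith [b1, b2]
      calc Real.exp (A * U' ω ^ 2 + B * V' ω ^ 2)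
          ≤ Real.exp (d₀ * Z' ω ^ 2 + (d₁ * X' ω ^ 2 + d₂ * Y' ω ^ 2)) := Real.exp_le_exp.mpr hb
        _ = F ω := by
            simp only [hFdef]
            rw [← Real.exp_add, ← Real.exp_add]
            congr 1
            ring
    calc (lam ^ (2 * k) * (U' ω ^ 2) ^ k / (2 ^ k * (Nat.factorial k : ℝ)))
          * (mu ^ (2 * l) * (V' ω ^ 2) ^ l / (2 ^ l * (Nat.factorial l : ℝ)))
        ≤ ((D ^ k)⁻¹ * Real.exp (A * U' ω ^ 2)) * ((D ^ l)⁻¹ * Real.exp (B * V' ω ^ 2)) := by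
          apply mul_le_mul h1 h2 (by positivity) (by positivity)
      _ = (D ^ (k + l))⁻¹ * (Real.exp (A * U' ω ^ 2) * Real.exp (B * V' ω ^ 2)) := by
          rw [pow_add, mul_inv]; ring
      _ ≤ (D ^ (k + l))⁻¹ * F ω := mul_le_mul_of_nonneg_left hexpb (by positivity)
  -- final chain
  have haeUV : (fun ω => U ω ^ (2 * k) * V ω ^ (2 * l))
      =ᵐ[P] (fun ω => U' ω ^ (2 * k) * V' ω ^ (2 * l)) := by
    filter_upwards [hUU', hVV'] with ω h1 h2
    rw [h1, h2]
  calc lam ^ (2 * k) * mu ^ (2 * l)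
        / (2 ^ (k + l) * (Nat.factorial k : ℝ) * (Nat.factorial l : ℝ))
        * ∫ ω, U ω ^ (2 * k) * V ω ^ (2 * l) ∂P
      = lam ^ (2 * k) * mu ^ (2 * l)
        / (2 ^ (k + l) * (Nat.factorial k : ℝ) * (Nat.factorial l : ℝ))
        * ∫ ω, U' ω ^ (2 * k) * V' ω ^ (2 * l) ∂P := by
        rw [integral_congr_ae haeUV]
    _ = ∫ ω, lam ^ (2 * k) * mu ^ (2 * l)
        / (2 ^ (k + l) * (Nat.factorial k : ℝ) * (Nat.factorial l : ℝ))
        * (U' ω ^ (2 * k) * V' ω ^ (2 * l)) ∂P := (integral_const_mul _ _).symm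
    _ ≤ ∫ ω, (D ^ (k + l))⁻¹ * F ω ∂P :=
        integral_mono (hint'.const_mul _) (hFint.const_mul _) fun ω => hpt ω
    _ = (D ^ (k + l))⁻¹ * C := by rw [integral_const_mul, hCdef]
    _ = C * ((1 + δ) ^ (2 * (k + l)))⁻¹ := by
        rw [pow_mul, hδsq, mul_comm]
end

section
/- Let ρ ∈ [0,1] and λ, μ ≥ 0 satisfy λ²(1−ρ²) < 1 and μ²(1−ρ²) < 1, and set c = λ²ρ²/(2(1−λ²(1−ρ²))) + μ²ρ²/(2(1−μ²(1−ρ²))). If c < 1/2, then the random variable exp((λ²U² + μ²V²)/2) is integrable and E[exp((λ²U² + μ²V²)/2)] = ((1 − λ²(1−ρ²)) · (1 − μ²(1−ρ²)) · (1 − 2c))^{−1/2}. (This is the explicit Gaussian computation at the heart of the proof of Lemma 5.8, obtained by successively integrating out G₁, G₂ and Z.) -/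
open MeasureTheory ProbabilityTheory
open Real
open scoped ENNReal NNReal

lemma myNorm_cexp (B c x : ℝ) :
    ‖Complex.exp ((B:ℂ) * (x:ℂ) ^ 2 + (c:ℂ) * (x:ℂ) + 0)‖ = Real.exp (B * x ^ 2 + c * x) := by
  rw [show ((B:ℂ) * (x:ℂ) ^ 2 + (c:ℂ) * (x:ℂ) + 0) = ((B * x ^ 2 + c * x : ℝ) : ℂ) by
    push_cast; ring]
  rw [Complex.norm_exp, Complex.ofReal_re]

lemma myIntegrable_exp_quad {B : ℝ} (hB : B < 0) (c : ℝ) :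
    Integrable (fun x : ℝ => Real.exp (B * x ^ 2 + c * x)) := by
  have h := (integrable_cexp_quadratic' (b := (B : ℂ)) (by simpa using hB) (c : ℂ) 0).norm
  have hfun : (fun x : ℝ => ‖Complex.exp ((B:ℂ) * (x:ℂ) ^ 2 + (c:ℂ) * (x:ℂ) + 0)‖)
      = fun x : ℝ => Real.exp (B * x ^ 2 + c * x) := funext fun x => myNorm_cexp B c x
  exact hfun ▸ h

lemma myIntegral_exp_quad {B : ℝ} (hB : B < 0) (c : ℝ) :
    ∫ x : ℝ, Real.exp (B * x ^ 2 + c * x)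
      = Real.sqrt (π / -B) * Real.exp (-c ^ 2 / (4 * B)) := by
  have h := integral_cexp_quadratic (b := (B : ℂ)) (by simpa using hB) (c : ℂ) 0
  have h2 : ∫ x : ℝ, Complex.exp ((B:ℂ) * (x:ℂ) ^ 2 + (c:ℂ) * (x:ℂ) + 0)
      = ((∫ x : ℝ, Real.exp (B * x ^ 2 + c * x) : ℝ) : ℂ) := by
    rw [show ((∫ x : ℝ, Real.exp (B * x ^ 2 + c * x) : ℝ) : ℂ)
        = ∫ x : ℝ, ((Real.exp (B * x ^ 2 + c * x) : ℝ) : ℂ) from (integral_ofReal).symm]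
    refine integral_congr_ae (Filter.Eventually.of_forall fun x => ?_)
    show Complex.exp ((B:ℂ) * (x:ℂ) ^ 2 + (c:ℂ) * (x:ℂ) + 0)
        = ((Real.exp (B * x ^ 2 + c * x) : ℝ) : ℂ)
    rw [show ((B:ℂ) * (x:ℂ) ^ 2 + (c:ℂ) * (x:ℂ) + 0) = ((B * x ^ 2 + c * x : ℝ) : ℂ) by
      push_cast; ring, Complex.ofReal_exp]
  rw [h2] at h
  have hπB : (0:ℝ) ≤ π / -B := div_nonneg pi_pos.le (by linarith)
  have h3 : ((Real.pi : ℂ) / -((B:ℝ) : ℂ)) ^ (1/2 : ℂ) = ((Real.sqrt (π / -B) : ℝ) : ℂ) := by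
    rw [show ((Real.pi : ℂ) / -((B:ℝ):ℂ)) = ((π / -B : ℝ) : ℂ) by push_cast; ring,
      show (1/2 : ℂ) = ((1/2 : ℝ) : ℂ) by norm_num,
      ← Complex.ofReal_cpow hπB]
    rw [Real.sqrt_eq_rpow]
  have h4 : Complex.exp (0 - ((c:ℝ):ℂ)^2 / (4 * ((B:ℝ):ℂ)))
      = ((Real.exp (-c ^ 2 / (4 * B)) : ℝ) : ℂ) := by
    rw [show ((0:ℂ) - ((c:ℝ):ℂ)^2 / (4 * ((B:ℝ):ℂ))) = ((-c^2/(4*B) : ℝ) : ℂ) by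
      push_cast; ring]
    simp [Complex.ofReal_exp]
  rw [h3, h4, ← Complex.ofReal_mul] at h
  exact_mod_cast h

lemma myGauss_int_eq (g : ℝ → ℝ) :
    ∫ x, g x ∂(gaussianReal 0 1) = ∫ x, gaussianPDFReal 0 1 x * g x := by
  rw [gaussianReal_of_var_ne_zero 0 one_ne_zero]
  rw [show gaussianPDF 0 1 = fun x => (((gaussianPDFReal 0 1 x).toNNReal : ℝ≥0) : ℝ≥0∞) from rfl]
  rw [integral_withDensity_eq_integral_smul ((measurable_gaussianPDFReal 0 1).real_toNNReal) g]
  refine integral_congr_ae (Filter.Eventually.of_forall fun x => ?_)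
  simp [NNReal.smul_def, Real.coe_toNNReal _ (gaussianPDFReal_nonneg 0 1 x)]

lemma myGauss_integrable_iff (g : ℝ → ℝ) :
    Integrable g (gaussianReal 0 1) ↔ Integrable (fun x => gaussianPDFReal 0 1 x * g x) volume := by
  rw [gaussianReal_of_var_ne_zero 0 one_ne_zero]
  rw [show gaussianPDF 0 1 = fun x => (((gaussianPDFReal 0 1 x).toNNReal : ℝ≥0) : ℝ≥0∞) from rfl]
  rw [integrable_withDensity_iff_integrable_smul ((measurable_gaussianPDFReal 0 1).real_toNNReal)]
  refine integrable_congr (Filter.Eventually.of_forall fun x => ?_)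
  simp [NNReal.smul_def, Real.coe_toNNReal _ (gaussianPDFReal_nonneg 0 1 x)]

lemma myGauss_quad {a : ℝ} (ha : a < 1) (b : ℝ) :
    Integrable (fun x => Real.exp (a * x ^ 2 / 2 + b * x)) (gaussianReal 0 1) ∧
    ∫ x, Real.exp (a * x ^ 2 / 2 + b * x) ∂(gaussianReal 0 1)
      = (Real.sqrt (1 - a))⁻¹ * Real.exp (b ^ 2 / (2 * (1 - a))) := by
  have h1a : (0:ℝ) < 1 - a := by linarith
  have hB : (a - 1) / 2 < 0 := by linarith
  have hpt : ∀ x, gaussianPDFReal 0 1 x * Real.exp (a * x ^ 2 / 2 + b * x)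
      = (Real.sqrt (2 * π))⁻¹ * Real.exp ((a - 1) / 2 * x ^ 2 + b * x) := by
    intro x
    rw [gaussianPDFReal]
    push_cast
    rw [mul_assoc, ← Real.exp_add, mul_one, mul_one]
    ring_nf
  constructor
  · rw [myGauss_integrable_iff]
    refine (((myIntegrable_exp_quad hB b).const_mul ((Real.sqrt (2 * π))⁻¹)).congr ?_)
    exact Filter.Eventually.of_forall fun x => (hpt x).symm
  · rw [myGauss_int_eq]
    simp_rw [hpt]
    rw [integral_const_mul, myIntegral_exp_quad hB b]
    have h2π : (0:ℝ) < 2 * π := by positivity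
    have hs : (Real.sqrt (2 * π))⁻¹ * Real.sqrt (π / -((a - 1) / 2)) = (Real.sqrt (1 - a))⁻¹ := by
      rw [show π / -((a - 1) / 2) = (2 * π) / (1 - a) by
        rw [show -((a - 1) / 2) = (1 - a) / 2 by ring, div_div_eq_mul_div]; ring]
      rw [Real.sqrt_div h2π.le]
      have : Real.sqrt (2 * π) ≠ 0 := by positivity
      field_simp
    rw [← mul_assoc, hs, show -b ^ 2 / (4 * ((a - 1) / 2)) = b ^ 2 / (2 * (1 - a)) by
      rw [show (4 * ((a - 1) / 2)) = -(2 * (1 - a)) by ring, div_neg, neg_div, neg_neg]]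

lemma myIIndepFun_congr {Ω ι : Type*} [MeasurableSpace Ω] {μ : Measure Ω} {β : ι → Type*}
    {m : ∀ i, MeasurableSpace (β i)} {f g : ∀ i, Ω → β i}
    (h : iIndepFun (m := m) f μ) (hfg : ∀ i, f i =ᵐ[μ] g i) : iIndepFun (m := m) g μ := by
  rw [iIndepFun_iff_measure_inter_preimage_eq_mul] at h ⊢
  intro S sets H
  have hae : ∀ᵐ ω ∂μ, ∀ i ∈ S, f i ω = g i ω := by
    rw [Filter.eventually_all_finset]
    exact fun i _ => hfg i
  have hset : (⋂ i ∈ S, f i ⁻¹' sets i) =ᵐ[μ] (⋂ i ∈ S, g i ⁻¹' sets i) := by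
    rw [Filter.eventuallyEq_set]
    filter_upwards [hae] with ω hω
    simp only [Set.mem_iInter, Set.mem_preimage]
    exact ⟨fun h' i hi => (hω i hi) ▸ h' i hi, fun h' i hi => (hω i hi).symm ▸ h' i hi⟩
  rw [measure_congr hset.symm, h S H]
  refine Finset.prod_congr rfl fun i hi => ?_
  exact measure_congr ((hfg i).preimage (sets i))

lemma mySlice {lam rho s a1 : ℝ} (hs2 : s ^ 2 = 1 - rho ^ 2)
    (ha1 : a1 = lam ^ 2 * (1 - rho ^ 2)) (ha1' : a1 < 1) (z : ℝ) :
    Integrable (fun g => Real.exp (lam ^ 2 * (rho * z + s * g) ^ 2 / 2)) (gaussianReal 0 1) ∧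
    ∫ g, Real.exp (lam ^ 2 * (rho * z + s * g) ^ 2 / 2) ∂(gaussianReal 0 1)
      = (Real.sqrt (1 - a1))⁻¹ * Real.exp (lam ^ 2 * rho ^ 2 / (2 * (1 - a1)) * z ^ 2) := by
  have key := myGauss_quad ha1' (lam ^ 2 * rho * s * z)
  have hfun : (fun g => Real.exp (lam ^ 2 * (rho * z + s * g) ^ 2 / 2))
      = fun g => Real.exp (a1 * g ^ 2 / 2 + lam ^ 2 * rho * s * z * g)
        * Real.exp (lam ^ 2 * rho ^ 2 * z ^ 2 / 2) := by
    funext g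
    rw [← Real.exp_add]
    congr 1
    rw [ha1, ← hs2]
    ring
  have h1a : (0:ℝ) < 1 - a1 := by linarith
  constructor
  · rw [hfun]; exact key.1.mul_const _
  · rw [hfun]
    rw [integral_mul_const, key.2, mul_assoc, ← Real.exp_add]
    congr 1
    rw [show (lam ^ 2 * rho * s * z) ^ 2 = lam ^ 2 * lam ^ 2 * rho ^ 2 * s ^ 2 * z ^ 2 by ring,
      hs2]
    subst ha1
    field_simp
    ring

lemma myProdComp {lam mu rho c : ℝ} (hrho0 : 0 ≤ rho) (hrho1 : rho ≤ 1)
    (hlam1 : lam ^ 2 * (1 - rho ^ 2) < 1) (hmu1 : mu ^ 2 * (1 - rho ^ 2) < 1)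
    (hc : c = lam ^ 2 * rho ^ 2 / (2 * (1 - lam ^ 2 * (1 - rho ^ 2)))
        + mu ^ 2 * rho ^ 2 / (2 * (1 - mu ^ 2 * (1 - rho ^ 2))))
    (hchalf : c < 1 / 2) :
    Integrable (fun p : ℝ × ℝ × ℝ =>
        Real.exp ((lam ^ 2 * (rho * p.1 + Real.sqrt (1 - rho ^ 2) * p.2.1) ^ 2
          + mu ^ 2 * (rho * p.1 + Real.sqrt (1 - rho ^ 2) * p.2.2) ^ 2) / 2))
      ((gaussianReal 0 1).prod ((gaussianReal 0 1).prod (gaussianReal 0 1))) ∧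
    ∫ p : ℝ × ℝ × ℝ,
        Real.exp ((lam ^ 2 * (rho * p.1 + Real.sqrt (1 - rho ^ 2) * p.2.1) ^ 2
          + mu ^ 2 * (rho * p.1 + Real.sqrt (1 - rho ^ 2) * p.2.2) ^ 2) / 2)
        ∂((gaussianReal 0 1).prod ((gaussianReal 0 1).prod (gaussianReal 0 1)))
      = (Real.sqrt ((1 - lam ^ 2 * (1 - rho ^ 2)) * (1 - mu ^ 2 * (1 - rho ^ 2))
          * (1 - 2 * c)))⁻¹ := by
  set γ := gaussianReal 0 1 with hγ
  set s := Real.sqrt (1 - rho ^ 2) with hsdef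
  have hrhosq : rho ^ 2 ≤ 1 := by nlinarith
  have hs2 : s ^ 2 = 1 - rho ^ 2 := Real.sq_sqrt (by linarith)
  have hA : (0:ℝ) < 1 - lam ^ 2 * (1 - rho ^ 2) := by linarith
  have hB : (0:ℝ) < 1 - mu ^ 2 * (1 - rho ^ 2) := by linarith
  have h2c : 2 * c < 1 := by linarith
  have h2c' : (0:ℝ) < 1 - 2 * c := by linarith
  -- the function splits
  have hsplit : ∀ z g₁ g₂ : ℝ,
      Real.exp ((lam ^ 2 * (rho * z + s * g₁) ^ 2 + mu ^ 2 * (rho * z + s * g₂) ^ 2) / 2)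
      = Real.exp (lam ^ 2 * (rho * z + s * g₁) ^ 2 / 2)
        * Real.exp (mu ^ 2 * (rho * z + s * g₂) ^ 2 / 2) := by
    intro z g₁ g₂; rw [← Real.exp_add]; congr 1; ring
  have hφ := fun z => mySlice (lam := lam) hs2 rfl hlam1 z
  have hψ := fun z => mySlice (lam := mu) hs2 rfl hmu1 z
  -- inner integral value
  have hinner : ∀ z : ℝ,
      ∫ q : ℝ × ℝ, Real.exp ((lam ^ 2 * (rho * z + s * q.1) ^ 2
          + mu ^ 2 * (rho * z + s * q.2) ^ 2) / 2) ∂(γ.prod γ)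
      = ((Real.sqrt (1 - lam ^ 2 * (1 - rho ^ 2)))⁻¹ * (Real.sqrt (1 - mu ^ 2 * (1 - rho ^ 2)))⁻¹)
        * Real.exp (2 * c * z ^ 2 / 2 + 0 * z) := by
    intro z
    simp_rw [hsplit z]
    rw [integral_prod_mul (fun g => Real.exp (lam ^ 2 * (rho * z + s * g) ^ 2 / 2))
      (fun g => Real.exp (mu ^ 2 * (rho * z + s * g) ^ 2 / 2))]
    rw [(hφ z).2, (hψ z).2]
    rw [show 2 * c * z ^ 2 / 2 + 0 * z
        = lam ^ 2 * rho ^ 2 / (2 * (1 - lam ^ 2 * (1 - rho ^ 2))) * z ^ 2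
          + mu ^ 2 * rho ^ 2 / (2 * (1 - mu ^ 2 * (1 - rho ^ 2))) * z ^ 2 by rw [hc]; ring]
    rw [Real.exp_add]; ring
  -- inner integrability
  have hinnerint : ∀ z : ℝ,
      Integrable (fun q : ℝ × ℝ => Real.exp ((lam ^ 2 * (rho * z + s * q.1) ^ 2
          + mu ^ 2 * (rho * z + s * q.2) ^ 2) / 2)) (γ.prod γ) := by
    intro z
    have := Integrable.mul_prod (hφ z).1 (hψ z).1
    refine this.congr (Filter.Eventually.of_forall fun q => ?_)
    exact (hsplit z q.1 q.2).symm
  have hout := myGauss_quad (a := 2 * c) h2c 0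
  have hcont : Continuous (fun p : ℝ × ℝ × ℝ =>
      Real.exp ((lam ^ 2 * (rho * p.1 + s * p.2.1) ^ 2
        + mu ^ 2 * (rho * p.1 + s * p.2.2) ^ 2) / 2)) := by fun_prop
  have hmble : AEStronglyMeasurable (fun p : ℝ × ℝ × ℝ =>
      Real.exp ((lam ^ 2 * (rho * p.1 + s * p.2.1) ^ 2
        + mu ^ 2 * (rho * p.1 + s * p.2.2) ^ 2) / 2)) (γ.prod (γ.prod γ)) :=
    hcont.aestronglyMeasurable
  have hint : Integrable (fun p : ℝ × ℝ × ℝ =>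
      Real.exp ((lam ^ 2 * (rho * p.1 + s * p.2.1) ^ 2
        + mu ^ 2 * (rho * p.1 + s * p.2.2) ^ 2) / 2)) (γ.prod (γ.prod γ)) := by
    rw [integrable_prod_iff hmble]
    constructor
    · exact Filter.Eventually.of_forall fun z => hinnerint z
    · have hib := hout.1.const_mul ((Real.sqrt (1 - lam ^ 2 * (1 - rho ^ 2)))⁻¹
        * (Real.sqrt (1 - mu ^ 2 * (1 - rho ^ 2)))⁻¹)
      have hnorm : ∀ z : ℝ, (∫ q : ℝ × ℝ, ‖Real.exp ((lam ^ 2 * (rho * z + s * q.1) ^ 2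
          + mu ^ 2 * (rho * z + s * q.2) ^ 2) / 2)‖ ∂(γ.prod γ))
          = ∫ q : ℝ × ℝ, Real.exp ((lam ^ 2 * (rho * z + s * q.1) ^ 2
          + mu ^ 2 * (rho * z + s * q.2) ^ 2) / 2) ∂(γ.prod γ) := fun z =>
        integral_congr_ae (Filter.Eventually.of_forall fun q => by
          simp [Real.norm_eq_abs, abs_of_pos (Real.exp_pos _)])
      refine hib.congr (Filter.Eventually.of_forall fun z => ?_)
      exact ((hnorm z).trans (hinner z)).symm
  refine ⟨hint, ?_⟩
  rw [integral_prod _ hint]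
  simp_rw [hinner]
  rw [integral_const_mul, hout.2,
    show (0:ℝ) ^ 2 / (2 * (1 - 2 * c)) = 0 by ring, Real.exp_zero, mul_one]
  rw [Real.sqrt_mul (mul_nonneg hA.le hB.le), Real.sqrt_mul hA.le, mul_inv, mul_inv]

/-- the explicit Gaussian computation at the heart of the proof of
Lemma 5.8.  Let `Z, G₁, G₂` be independent standard Gaussians, `U = ρZ + √(1−ρ²)G₁`,
`V = ρZ + √(1−ρ²)G₂`, let `ρ ∈ [0,1]`, `λ, μ ≥ 0` with `λ²(1−ρ²) < 1`, `μ²(1−ρ²) < 1`,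
and set `c = λ²ρ²/(2(1−λ²(1−ρ²))) + μ²ρ²/(2(1−μ²(1−ρ²)))`.  If `c < 1/2`, then
`exp((λ²U² + μ²V²)/2)` is integrable and
`E[exp((λ²U² + μ²V²)/2)] = ((1−λ²(1−ρ²))(1−μ²(1−ρ²))(1−2c))^{−1/2}`. -/
theorem stmt11 {Ω : Type*} [MeasurableSpace Ω] (P : Measure Ω) [IsProbabilityMeasure P]
    (Z G₁ G₂ : Ω → ℝ)
    (hZ : Measure.map Z P = gaussianReal 0 1)
    (hG₁ : Measure.map G₁ P = gaussianReal 0 1)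
    (hG₂ : Measure.map G₂ P = gaussianReal 0 1)
    (hindep : iIndepFun ![Z, G₁, G₂] P)
    (rho lam mu : ℝ)
    (hrho : 0 ≤ rho ∧ rho ≤ 1) (hlam : 0 ≤ lam) (hmu : 0 ≤ mu)
    (hlam1 : lam ^ 2 * (1 - rho ^ 2) < 1) (hmu1 : mu ^ 2 * (1 - rho ^ 2) < 1)
    (U V : Ω → ℝ)
    (hU : ∀ ω, U ω = rho * Z ω + Real.sqrt (1 - rho ^ 2) * G₁ ω)
    (hV : ∀ ω, V ω = rho * Z ω + Real.sqrt (1 - rho ^ 2) * G₂ ω)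
    (c : ℝ)
    (hc : c = lam ^ 2 * rho ^ 2 / (2 * (1 - lam ^ 2 * (1 - rho ^ 2)))
        + mu ^ 2 * rho ^ 2 / (2 * (1 - mu ^ 2 * (1 - rho ^ 2))))
    (hchalf : c < 1 / 2) :
    Integrable (fun ω => Real.exp ((lam ^ 2 * U ω ^ 2 + mu ^ 2 * V ω ^ 2) / 2)) P ∧
    ∫ ω, Real.exp ((lam ^ 2 * U ω ^ 2 + mu ^ 2 * V ω ^ 2) / 2) ∂P
      = (Real.sqrt ((1 - lam ^ 2 * (1 - rho ^ 2)) * (1 - mu ^ 2 * (1 - rho ^ 2))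
          * (1 - 2 * c)))⁻¹ := by
  have hne : (gaussianReal 0 1 : Measure ℝ) ≠ 0 := IsProbabilityMeasure.ne_zero _
  have haeZ : AEMeasurable Z P := by
    by_contra h
    rw [Measure.map_of_not_aemeasurable h] at hZ
    exact hne hZ.symm
  have haeG₁ : AEMeasurable G₁ P := by
    by_contra h
    rw [Measure.map_of_not_aemeasurable h] at hG₁
    exact hne hG₁.symm
  have haeG₂ : AEMeasurable G₂ P := by
    by_contra h
    rw [Measure.map_of_not_aemeasurable h] at hG₂
    exact hne hG₂.symm
  set Z' := haeZ.mk Z with hZ'def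
  set G₁' := haeG₁.mk G₁ with hG₁'def
  set G₂' := haeG₂.mk G₂ with hG₂'def
  have hZm : Measurable Z' := haeZ.measurable_mk
  have hG₁m : Measurable G₁' := haeG₁.measurable_mk
  have hG₂m : Measurable G₂' := haeG₂.measurable_mk
  have hZae : Z =ᵐ[P] Z' := haeZ.ae_eq_mk
  have hG₁ae : G₁ =ᵐ[P] G₁' := haeG₁.ae_eq_mk
  have hG₂ae : G₂ =ᵐ[P] G₂' := haeG₂.ae_eq_mk
  have hZ' : Measure.map Z' P = gaussianReal 0 1 := by rw [← Measure.map_congr hZae, hZ]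
  have hG₁' : Measure.map G₁' P = gaussianReal 0 1 := by rw [← Measure.map_congr hG₁ae, hG₁]
  have hG₂' : Measure.map G₂' P = gaussianReal 0 1 := by rw [← Measure.map_congr hG₂ae, hG₂]
  have hindep' : iIndepFun ![Z', G₁', G₂'] P := by
    refine myIIndepFun_congr hindep fun i => ?_
    fin_cases i <;> simpa using (by assumption : _)
  have hmeas : ∀ i, Measurable (![Z', G₁', G₂'] i) := by
    intro i; fin_cases i <;> simpa
  have h12 : IndepFun G₁' G₂' P := hindep'.indepFun (by decide : (1 : Fin 3) ≠ 2)
  have hpair : Measure.map (fun ω => (G₁' ω, G₂' ω)) P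
      = (gaussianReal 0 1).prod (gaussianReal 0 1) := by
    refine ((indepFun_iff_map_prod_eq_prod_map_map hG₁m.aemeasurable
      hG₂m.aemeasurable).mp h12).trans ?_
    rw [hG₁', hG₂']
  have hZpair : IndepFun Z' (fun ω => (G₁' ω, G₂' ω)) P :=
    (hindep'.indepFun_prodMk hmeas 1 2 0 (by decide) (by decide)).symm
  have hT : Measure.map (fun ω => (Z' ω, (G₁' ω, G₂' ω))) P
      = (gaussianReal 0 1).prod ((gaussianReal 0 1).prod (gaussianReal 0 1)) := by
    rw [(indepFun_iff_map_prod_eq_prod_map_map hZm.aemeasurable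
      (hG₁m.prodMk hG₂m).aemeasurable).mp hZpair, hZ', hpair]
  set F : ℝ × ℝ × ℝ → ℝ := fun p =>
    Real.exp ((lam ^ 2 * (rho * p.1 + Real.sqrt (1 - rho ^ 2) * p.2.1) ^ 2
      + mu ^ 2 * (rho * p.1 + Real.sqrt (1 - rho ^ 2) * p.2.2) ^ 2) / 2) with hFdef
  have hFnear := myProdComp (lam := lam) (mu := mu) hrho.1 hrho.2 hlam1 hmu1 hc hchalf
  have hFcont : Continuous F := by fun_prop
  have hTmeas : Measurable (fun ω => (Z' ω, (G₁' ω, G₂' ω))) :=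
    hZm.prodMk (hG₁m.prodMk hG₂m)
  have heq : (fun ω => Real.exp ((lam ^ 2 * U ω ^ 2 + mu ^ 2 * V ω ^ 2) / 2))
      =ᵐ[P] (fun ω => F (Z' ω, (G₁' ω, G₂' ω))) := by
    filter_upwards [hZae, hG₁ae, hG₂ae] with ω e1 e2 e3
    simp only [hFdef]
    rw [hU, hV, e1, e2, e3]
  have hintP : Integrable (fun ω => F (Z' ω, (G₁' ω, G₂' ω))) P := by
    have h1 : Integrable F (Measure.map (fun ω => (Z' ω, (G₁' ω, G₂' ω))) P) := by
      rw [hT]; exact hFnear.1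
    exact (integrable_map_measure hFcont.aestronglyMeasurable
      hTmeas.aemeasurable).mp h1
  refine ⟨hintP.congr heq.symm, ?_⟩
  rw [integral_congr_ae heq]
  rw [show ∫ ω, F (Z' ω, (G₁' ω, G₂' ω)) ∂P
      = ∫ p, F p ∂(Measure.map (fun ω => (Z' ω, (G₁' ω, G₂' ω))) P) from
    (integral_map hTmeas.aemeasurable hFcont.aestronglyMeasurable).symm]
  rw [hT]
  exact hFnear.2
end

section
/- For every sequence (k_N)_{N≥1} of positive integers with log k_N / log N → 0 as N → ∞ (that is, k_N = N^{o(1)}), one has k_N! · S(N, k_N) / (2^{k_N} · N^{k_N}) → 1 as N → ∞; in particular S(N, k_N) = (1 + o(1)) · 2^{k_N} N^{k_N} / k_N!. (This is Lemma 5.12: the dominant contribution to the convolution of central binomial coefficients comes from tuples with all k_i ∈ {0,1}.) -/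
open Filter

/-- `S(N, k) = Σ_{k₁+⋯+k_N = k} ∏_{i=1}^N C(2kᵢ, kᵢ)`, the convolution of central
binomial coefficients. -/
def centralBinomConv (N k : ℕ) : ℕ :=
  ∑ f ∈ Finset.Nat.antidiagonalTuple N k, ∏ i, Nat.choose (2 * f i) (f i)


lemma conv_succ (N k : ℕ) :
    centralBinomConv (N + 1) k =
      ∑ p ∈ Finset.HasAntidiagonal.antidiagonal k, Nat.choose (2 * p.1) p.1 * centralBinomConv N p.2 := by
  unfold centralBinomConv
  simp only [Finset.mul_sum]
  rw [Finset.sum_sigma']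
  refine Finset.sum_nbij' (fun f => ⟨(f 0, ∑ i, Fin.tail f i), Fin.tail f⟩)
    (fun x => Fin.cons x.1.1 x.2) ?_ ?_ ?_ ?_ ?_
  · intro f hf
    simp only [Finset.mem_sigma, Finset.HasAntidiagonal.mem_antidiagonal,
      Finset.Nat.mem_antidiagonalTuple] at *
    refine ⟨?_, trivial⟩
    rw [← hf, Fin.sum_univ_succ]; rfl
  · intro x hx
    simp only [Finset.mem_sigma, Finset.HasAntidiagonal.mem_antidiagonal,
      Finset.Nat.mem_antidiagonalTuple] at *
    rw [Fin.sum_univ_succ]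
    simpa [Fin.tail] using by rw [show (∑ i, x.2 i) = x.1.2 from hx.2]; exact hx.1
  · intro f _; exact Fin.cons_self_tail f
  · intro x hx
    simp only [Finset.mem_sigma, Finset.HasAntidiagonal.mem_antidiagonal,
      Finset.Nat.mem_antidiagonalTuple] at hx
    refine Sigma.ext ?_ ?_
    · simp [Fin.tail_cons, hx.2]
    · simp [Fin.tail_cons]
  · intro f _
    rw [Fin.prod_univ_succ]
    rfl

lemma key : ∀ N k : ℕ, k.factorial * centralBinomConv N k =
    ∏ j ∈ Finset.range k, (2 * N + 4 * j) := by
  intro N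
  induction N with
  | zero =>
    intro k
    match k with
    | 0 => simp [centralBinomConv]
    | k + 1 =>
      rw [Finset.prod_eq_zero (Finset.mem_range.mpr (Nat.succ_pos k)) (by norm_num)]
      simp [centralBinomConv, Finset.Nat.antidiagonalTuple_zero_succ]
  | succ N IH =>
    -- recurrence in second variable for level N
    have hrec : ∀ b : ℕ, (b + 1) * centralBinomConv N (b + 1)
        = (2 * N + 4 * b) * centralBinomConv N b := by
      intro b
      have h1 := IH (b + 1)
      rw [Finset.prod_range_succ, ← IH b, Nat.factorial_succ, mul_assoc] at h1
      have h2 : (b + 1) * centralBinomConv N (b + 1) * b.factorial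
          = (2 * N + 4 * b) * centralBinomConv N b * b.factorial := by
        calc (b + 1) * centralBinomConv N (b + 1) * b.factorial
            = (b + 1) * (b.factorial * centralBinomConv N (b + 1)) := by ring
          _ = b.factorial * centralBinomConv N b * (2 * N + 4 * b) := h1
          _ = (2 * N + 4 * b) * centralBinomConv N b * b.factorial := by ring
      exact Nat.eq_of_mul_eq_mul_right b.factorial_pos h2
    intro k
    induction k with
    | zero => simp [centralBinomConv, Finset.Nat.antidiagonalTuple_zero_right]
    | succ k IHk =>
      rw [conv_succ] at IHk ⊢
      have step : (k + 1) * ∑ p ∈ Finset.HasAntidiagonal.antidiagonal (k + 1),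
          Nat.choose (2 * p.1) p.1 * centralBinomConv N p.2
          = (2 * (N + 1) + 4 * k) * ∑ p ∈ Finset.HasAntidiagonal.antidiagonal k,
            Nat.choose (2 * p.1) p.1 * centralBinomConv N p.2 := by
        have expand : (k + 1) * ∑ p ∈ Finset.HasAntidiagonal.antidiagonal (k + 1),
            Nat.choose (2 * p.1) p.1 * centralBinomConv N p.2
            = (∑ p ∈ Finset.HasAntidiagonal.antidiagonal (k + 1),
                (p.1 * (Nat.choose (2 * p.1) p.1 * centralBinomConv N p.2)))
              + ∑ p ∈ Finset.HasAntidiagonal.antidiagonal (k + 1),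
                (p.2 * (Nat.choose (2 * p.1) p.1 * centralBinomConv N p.2)) := by
          rw [Finset.mul_sum, ← Finset.sum_add_distrib]
          refine Finset.sum_congr rfl fun p hp => ?_
          rw [← add_mul, Finset.HasAntidiagonal.mem_antidiagonal.mp hp]
        rw [expand]
        rw [Finset.Nat.sum_antidiagonal_succ
          (f := fun p => p.1 * (Nat.choose (2 * p.1) p.1 * centralBinomConv N p.2))]
        rw [Finset.Nat.sum_antidiagonal_succ'
          (f := fun p => p.2 * (Nat.choose (2 * p.1) p.1 * centralBinomConv N p.2))]
        simp only [zero_mul, mul_zero, zero_add]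
        have e1 : ∀ p : ℕ × ℕ, (p.1 + 1) * (Nat.choose (2 * (p.1 + 1)) (p.1 + 1)
              * centralBinomConv N p.2)
            = (2 * (2 * p.1 + 1)) * (Nat.choose (2 * p.1) p.1 * centralBinomConv N p.2) := by
          intro p
          rw [← mul_assoc, ← mul_assoc]
          congr 1
          exact Nat.succ_mul_centralBinom_succ p.1
        have e2 : ∀ p : ℕ × ℕ, (p.2 + 1) * (Nat.choose (2 * p.1) p.1
              * centralBinomConv N (p.2 + 1))
            = (2 * N + 4 * p.2) * (Nat.choose (2 * p.1) p.1 * centralBinomConv N p.2) := by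
          intro p
          rw [mul_left_comm, hrec p.2, mul_left_comm]
        simp only [e1, e2]
        rw [← Finset.sum_add_distrib, Finset.mul_sum]
        refine Finset.sum_congr rfl fun p hp => ?_
        rw [← add_mul]
        congr 1
        have := Finset.HasAntidiagonal.mem_antidiagonal.mp hp
        omega
      calc (k + 1).factorial * ∑ p ∈ Finset.HasAntidiagonal.antidiagonal (k + 1),
            Nat.choose (2 * p.1) p.1 * centralBinomConv N p.2
          = k.factorial * ((k + 1) * ∑ p ∈ Finset.HasAntidiagonal.antidiagonal (k + 1),
              Nat.choose (2 * p.1) p.1 * centralBinomConv N p.2) := by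
            rw [Nat.factorial_succ]; ring
        _ = k.factorial * ((2 * (N + 1) + 4 * k) * ∑ p ∈ Finset.HasAntidiagonal.antidiagonal k,
              Nat.choose (2 * p.1) p.1 * centralBinomConv N p.2) := by rw [step]
        _ = (2 * (N + 1) + 4 * k) * (k.factorial * ∑ p ∈ Finset.HasAntidiagonal.antidiagonal k,
              Nat.choose (2 * p.1) p.1 * centralBinomConv N p.2) := by ring
        _ = ∏ j ∈ Finset.range (k + 1), (2 * (N + 1) + 4 * j) := by
            rw [IHk, Finset.prod_range_succ]; ring

/-- Lemma 5.12.  For every sequence `(k_N)` of positive integers with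
`log k_N / log N → 0` (i.e. `k_N = N^{o(1)}`), one has
`k_N! · S(N, k_N) / (2^{k_N} · N^{k_N}) → 1` as `N → ∞`. -/
theorem stmt14 (k : ℕ → ℕ) (hpos : ∀ N, 1 ≤ k N)
    (hsub : Tendsto (fun N : ℕ => Real.log (k N) / Real.log N) atTop (nhds 0)) :
    Tendsto
      (fun N : ℕ =>
        ((Nat.factorial (k N) * centralBinomConv N (k N) : ℕ) : ℝ)
          / (2 ^ k N * (N : ℝ) ^ k N))
      atTop (nhds 1) := by
  set r : ℕ → ℝ := fun N =>
    ((Nat.factorial (k N) * centralBinomConv N (k N) : ℕ) : ℝ) / (2 ^ k N * (N : ℝ) ^ k N)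
    with hrdef
  -- eventually k N ^ 2 ≤ sqrt N
  have hksmall : ∀ᶠ N : ℕ in atTop, ((k N : ℝ)) ^ 2 ≤ Real.sqrt N := by
    have h := hsub.eventually (eventually_lt_nhds (show (0:ℝ) < 1/4 by norm_num))
    filter_upwards [h, eventually_ge_atTop 3] with N h1 h3
    have hN1 : (1:ℝ) < N := by exact_mod_cast (by omega : 1 < N)
    have hlogN : 0 < Real.log N := Real.log_pos hN1
    have hk1 : (1:ℝ) ≤ (k N : ℝ) := by exact_mod_cast hpos N
    have hlogk : Real.log (k N) < Real.log N / 4 := by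
      rw [div_lt_iff₀ hlogN] at h1
      linarith
    have hkpos : (0:ℝ) < (k N : ℝ)^2 := by positivity
    have hNnn : (0:ℝ) ≤ (N:ℝ) := by positivity
    have hlhs : Real.log ((k N : ℝ)^2) < Real.log (Real.sqrt N) := by
      rw [Real.log_pow, Real.log_sqrt hNnn]
      push_cast
      linarith
    have hsq : (0:ℝ) < Real.sqrt N := Real.sqrt_pos.mpr (by linarith)
    exact le_of_lt ((Real.log_lt_log_iff hkpos hsq).mp hlhs)
  -- bounds on r
  have hbounds : ∀ᶠ N : ℕ in atTop,
      1 ≤ r N ∧ r N ≤ Real.exp (2 / Real.sqrt N) := by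
    filter_upwards [hksmall, eventually_ge_atTop 1] with N hk hN1
    have hNpos : (0:ℝ) < N := by exact_mod_cast hN1
    have hnum : ((Nat.factorial (k N) * centralBinomConv N (k N) : ℕ) : ℝ)
        = ∏ j ∈ Finset.range (k N), (2 * (N:ℝ) + 4 * j) := by
      rw [key N (k N)]
      push_cast
      rfl
    have hden : (2:ℝ) ^ k N * (N : ℝ) ^ k N
        = ∏ _j ∈ Finset.range (k N), (2 * (N:ℝ)) := by
      rw [Finset.prod_const, Finset.card_range, mul_pow]
    have hr : r N = ∏ j ∈ Finset.range (k N), (1 + 2 * (j:ℝ) / N) := by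
      rw [hrdef]
      simp only
      rw [hnum, hden, ← Finset.prod_div_distrib]
      refine Finset.prod_congr rfl fun j _ => ?_
      field_simp
      ring
    constructor
    · rw [hr]
      calc (1:ℝ) = ∏ _j ∈ Finset.range (k N), (1:ℝ) := by simp
        _ ≤ ∏ j ∈ Finset.range (k N), (1 + 2 * (j:ℝ) / N) := by
            refine Finset.prod_le_prod (fun j _ => by norm_num) fun j _ => ?_
            have : (0:ℝ) ≤ 2 * (j:ℝ) / N := by positivity
            linarith
    · rw [hr]
      have step1 : ∏ j ∈ Finset.range (k N), (1 + 2 * (j:ℝ) / N)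
          ≤ ∏ _j ∈ Finset.range (k N), Real.exp (2 * (k N : ℝ) / N) := by
        refine Finset.prod_le_prod (fun j _ => by positivity) fun j hj => ?_
        have hjk : (j:ℝ) ≤ (k N : ℝ) := by
          exact_mod_cast le_of_lt (Finset.mem_range.mp hj)
        calc (1 + 2 * (j:ℝ) / N) ≤ 1 + 2 * (k N : ℝ) / N := by
              gcongr
          _ ≤ Real.exp (2 * (k N : ℝ) / N) := by
              have := Real.add_one_le_exp (2 * (k N : ℝ) / N)
              linarith
      refine step1.trans ?_
      rw [Finset.prod_const, Finset.card_range, ← Real.exp_nat_mul, Real.exp_le_exp]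
      have hsqpos : (0:ℝ) < Real.sqrt N := Real.sqrt_pos.mpr hNpos
      have hNs : Real.sqrt N * Real.sqrt N = (N:ℝ) := Real.mul_self_sqrt (le_of_lt hNpos)
      have h1 : (k N : ℝ) * (2 * (k N:ℝ) / N) = 2 * ((k N:ℝ)^2) / N := by ring
      rw [h1, div_le_div_iff₀ hNpos hsqpos]
      calc 2 * (k N:ℝ)^2 * Real.sqrt N ≤ 2 * Real.sqrt N * Real.sqrt N := by
            nlinarith [hk, hsqpos.le]
        _ = 2 * (N:ℝ) := by rw [mul_assoc, hNs]
  -- squeeze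
  have hexp : Tendsto (fun N : ℕ => Real.exp (2 / Real.sqrt N)) atTop (nhds 1) := by
    have h1 : Tendsto (fun x : ℝ => x ^ (1/2:ℝ)) atTop atTop :=
      tendsto_rpow_atTop (by norm_num)
    have hsq : Tendsto (fun N : ℕ => Real.sqrt N) atTop atTop :=
      (h1.comp tendsto_natCast_atTop_atTop).congr fun N => (Real.sqrt_eq_rpow _).symm
    have h0 : Tendsto (fun N : ℕ => 2 / Real.sqrt N) atTop (nhds 0) :=
      Tendsto.div_atTop tendsto_const_nhds hsq
    have := (Real.continuous_exp.tendsto 0).comp h0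
    simpa [Function.comp_def] using this
  refine tendsto_of_tendsto_of_tendsto_of_le_of_le' tendsto_const_nhds hexp
    (hbounds.mono fun N h => h.1) (hbounds.mono fun N h => h.2)
end
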